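/- arXiv:1703.09426 — 3 statements merged into one kernel-verified Lean document; each statement's English description precedes it below -/
import Mathlib

section
/- Let C_i ⊆ H, i ∈ I = {1,…,m}, be closed convex sets with C := ⋂_{i∈I} C_i ≠ ∅, and let {x^k} be generated by the double-layer projection algorithm x^{k+1} := x^k + α_k(Σ_{i∈I_k} ω_i^k P_{C_i} x^k − x^k) under conditions (i) and (ii), and assume (iii): I_k ∩ Argmax_{j∈J_k} d(x^k, C_j) ≠ ∅ for every k. If the family {C_i : i ∈ I} is κ_r-linearly regular over B(P_C x^0, r) with r := d(x^0, C) > 0, then {x^k} converges linearly to some x^∞ ∈ C: ‖x^k − x^∞‖ ≤ c_r q_r^k where q_r := (1 − (ω⁻(2−α⁺)(α⁻)²/(s α⁺)) · (1/κ_r²))^{1/(2s)} and c_r := 2 d(x^0, C)/q_r^{s−1}; moreover the error bound (1/(2κ_r)) ‖x^k − x^∞‖ ≤ max_{i∈I} d(x^k, C_i) ≤ c_r q_r^k holds for every k. -/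
open Filter Metric Bornology RealInnerProductSpace
open Topology

section Aux
variable {H : Type*} [NormedAddCommGroup H] [InnerProductSpace ℝ H]

lemma dlp_proj_inner_le {K : Set H} (hK : Convex ℝ K) {y p : H} (hp : p ∈ K)
    (hproj : ‖y - p‖ = infDist y K) {w : H} (hw : w ∈ K) :
    ⟪y - p, w - p⟫ ≤ 0 := by
  have h : ‖y - p‖ = ⨅ w : K, ‖y - w‖ := by
    rw [hproj, infDist_eq_iInf]; simp_rw [dist_eq_norm]
  exact (norm_eq_iInf_iff_real_inner_le_zero hK hp).1 h w hw

lemma dlp_norm_sq_sum_le {ι : Type*} (t : Finset ι) (w : ι → ℝ) (a : ι → H)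
    (hw : ∀ i ∈ t, 0 ≤ w i) (hsum : ∑ i ∈ t, w i = 1) :
    ‖∑ i ∈ t, w i • a i‖ ^ 2 ≤ ∑ i ∈ t, w i * ‖a i‖ ^ 2 := by
  have h1 : ‖∑ i ∈ t, w i • a i‖ ≤ ∑ i ∈ t, w i * ‖a i‖ := by
    refine (norm_sum_le _ _).trans (le_of_eq ?_)
    refine Finset.sum_congr rfl fun i hi => ?_
    rw [norm_smul, Real.norm_eq_abs, abs_of_nonneg (hw i hi)]
  have h2 : (∑ i ∈ t, w i * ‖a i‖) ^ 2 ≤ (∑ i ∈ t, w i) * ∑ i ∈ t, w i * ‖a i‖ ^ 2 :=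
    Finset.sum_sq_le_sum_mul_sum_of_sq_eq_mul t hw
      (fun i hi => mul_nonneg (hw i hi) (by positivity)) (fun i hi => by ring)
  calc ‖∑ i ∈ t, w i • a i‖ ^ 2 ≤ (∑ i ∈ t, w i * ‖a i‖) ^ 2 :=
        pow_le_pow_left₀ (norm_nonneg _) h1 2
    _ ≤ _ := by rw [hsum] at h2; linarith

lemma dlp_le_of_sq_le_sq {a b : ℝ} (hb : 0 ≤ b) (h : a ^ 2 ≤ b ^ 2) (ha : 0 ≤ a) : a ≤ b := by
  nlinarith

end Aux

set_option maxHeartbeats 2000000 in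
/-- Linear convergence with error bound of the double-layer projection
algorithm under the remotest-set control condition and bounded linear regularity of
the family of sets. -/
theorem doubleLayer_projection_linear_convergence
    {H : Type*} [NormedAddCommGroup H] [InnerProductSpace ℝ H] [CompleteSpace H]
    {m : ℕ} [NeZero m]
    (Cs : Fin m → Set H)
    (hCscl : ∀ i, IsClosed (Cs i)) (hCscv : ∀ i, Convex ℝ (Cs i))
    (hCsne : ∀ i, (Cs i).Nonempty) (hC : (⋂ i, Cs i).Nonempty)
    (P : Fin m → H → H)
    (hP : ∀ i, ∀ y : H, P i y ∈ Cs i ∧ ‖y - P i y‖ = infDist y (Cs i))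
    (x : ℕ → H) (Ik Jk : ℕ → Finset (Fin m)) (α : ℕ → ℝ) (ω : ℕ → Fin m → ℝ)
    (hIkne : ∀ k, (Ik k).Nonempty) (hIJ : ∀ k, Ik k ⊆ Jk k)
    (αminus αplus ωminus : ℝ)
    (hαminus : αminus ∈ Set.Ioc (0 : ℝ) 1) (hαplus : αplus ∈ Set.Ico (1 : ℝ) 2)
    (hωminus : ωminus ∈ Set.Ioc (0 : ℝ) 1)
    (hα : ∀ k, α k ∈ Set.Icc αminus αplus)
    (hω : ∀ k, ∀ i ∈ Ik k, ω k i ∈ Set.Icc ωminus 1)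
    (hωsum : ∀ k, ∑ i ∈ Ik k, ω k i = 1)
    (hrec : ∀ k, x (k + 1) = x k + α k • ((∑ i ∈ Ik k, ω k i • P i (x k)) - x k))
    (s : ℕ) (hs : 1 ≤ s)
    (hcover : ∀ k, ∀ i : Fin m, ∃ l < s, i ∈ Jk (k + l))
    (hiii : ∀ k, ∃ i ∈ Ik k, ∀ j ∈ Jk k, infDist (x k) (Cs j) ≤ infDist (x k) (Cs i))
    (hr : 0 < infDist (x 0) (⋂ i, Cs i))
    (x0p : H) (hx0p : x0p ∈ ⋂ i, Cs i)
    (hx0pproj : ‖x 0 - x0p‖ = infDist (x 0) (⋂ i, Cs i))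
    (κ : ℝ) (hκ : 0 < κ)
    (hlinreg : ∀ y ∈ closedBall x0p (infDist (x 0) (⋂ i, Cs i)),
      infDist y (⋂ i, Cs i) ≤
        κ * Finset.univ.sup' Finset.univ_nonempty fun i => infDist y (Cs i)) :
    ∃ xinf ∈ ⋂ i, Cs i,
      (∀ k : ℕ, ‖x k - xinf‖ ≤
        2 * infDist (x 0) (⋂ i, Cs i) /
            ((1 - ωminus * (2 - αplus) * αminus ^ 2 / ((s : ℝ) * αplus) *
                (1 / κ ^ 2)) ^ ((1 : ℝ) / (2 * (s : ℝ)))) ^ (s - 1) *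
          ((1 - ωminus * (2 - αplus) * αminus ^ 2 / ((s : ℝ) * αplus) *
              (1 / κ ^ 2)) ^ ((1 : ℝ) / (2 * (s : ℝ)))) ^ k) ∧
      (∀ k : ℕ,
        1 / (2 * κ) * ‖x k - xinf‖ ≤
          (Finset.univ.sup' Finset.univ_nonempty fun i => infDist (x k) (Cs i)) ∧
        (Finset.univ.sup' Finset.univ_nonempty fun i => infDist (x k) (Cs i)) ≤
          2 * infDist (x 0) (⋂ i, Cs i) /
              ((1 - ωminus * (2 - αplus) * αminus ^ 2 / ((s : ℝ) * αplus) *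
                  (1 / κ ^ 2)) ^ ((1 : ℝ) / (2 * (s : ℝ)))) ^ (s - 1) *
            ((1 - ωminus * (2 - αplus) * αminus ^ 2 / ((s : ℝ) * αplus) *
                (1 / κ ^ 2)) ^ ((1 : ℝ) / (2 * (s : ℝ)))) ^ k) := by
  classical
  obtain ⟨hαm0, hαm1⟩ := hαminus
  obtain ⟨hαp1, hαp2⟩ := hαplus
  obtain ⟨hωm0, hωm1⟩ := hωminus
  obtain ⟨C, hCdef⟩ : ∃ t : Set H, t = ⋂ i, Cs i := ⟨_, rfl⟩
  rw [← hCdef] at hC hx0p hr hx0pproj hlinreg ⊢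
  have hCcl : IsClosed C := by rw [hCdef]; exact isClosed_iInter fun i => hCscl i
  have hCcv : Convex ℝ C := by rw [hCdef]; exact convex_iInter fun i => hCscv i
  have hCsub : ∀ i, C ⊆ Cs i := by rw [hCdef]; exact fun i => Set.iInter_subset _ i
  have hdle : ∀ (y : H) (i : Fin m), infDist y (Cs i) ≤ infDist y C := fun y i =>
    infDist_le_infDist_of_subset (hCsub i) hC
  obtain ⟨r, hrdef⟩ : ∃ t : ℝ, t = infDist (x 0) C := ⟨_, rfl⟩
  rw [← hrdef] at hr hx0pproj hlinreg ⊢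
  -- projection onto C exists
  have proj : ∀ u : H, ∃ z ∈ C, ‖u - z‖ = infDist u C := by
    intro u
    obtain ⟨z, hz, hzeq⟩ := exists_norm_eq_iInf_of_complete_convex hC hCcl.isComplete hCcv u
    refine ⟨z, hz, ?_⟩
    rw [hzeq, infDist_eq_iInf]; simp_rw [dist_eq_norm]
  have hJne : ∀ k, (Jk k).Nonempty := fun k => (hIkne k).mono (hIJ k)
  have hPd : ∀ (i : Fin m) (y : H), ‖P i y - y‖ = infDist y (Cs i) := fun i y => by
    rw [norm_sub_rev]; exact (hP i y).2
  have hω0 : ∀ n, ∀ i ∈ Ik n, (0:ℝ) ≤ ω n i := fun n i hi =>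
    le_trans hωm0.le (hω n i hi).1
  have hαpos : ∀ n, 0 < α n := fun n => lt_of_lt_of_le hαm0 (hα n).1
  have hα2 : ∀ n, α n < 2 := fun n => lt_of_le_of_lt (hα n).2 hαp2
  obtain ⟨Mf, hMfdef⟩ : ∃ f : ℕ → ℝ,
      f = fun n => (Jk n).sup' (hJne n) fun j => infDist (x n) (Cs j) := ⟨_, rfl⟩
  have hM0 : ∀ n, 0 ≤ Mf n := by
    intro n; rw [hMfdef]
    exact infDist_nonneg.trans
      (Finset.le_sup' (fun j => infDist (x n) (Cs j)) (hJne n).choose_spec)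
  have hMle : ∀ n, ∀ j ∈ Jk n, infDist (x n) (Cs j) ≤ Mf n := by
    intro n j hj; rw [hMfdef]
    exact Finset.le_sup' (fun j => infDist (x n) (Cs j)) hj
  obtain ⟨Sf, hSfdef⟩ : ∃ f : ℕ → ℝ,
      f = fun n => ∑ i ∈ Ik n, ω n i * ‖P i (x n) - x n‖ ^ 2 := ⟨_, rfl⟩
  have hS0 : ∀ n, 0 ≤ Sf n := by
    intro n; rw [hSfdef]
    exact Finset.sum_nonneg fun i hi => mul_nonneg (hω0 n i hi) (sq_nonneg _)
  have hvsum : ∀ n, (∑ i ∈ Ik n, ω n i • (P i (x n) - x n))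
      = (∑ i ∈ Ik n, ω n i • P i (x n)) - x n := by
    intro n
    simp only [smul_sub, Finset.sum_sub_distrib, ← Finset.sum_smul, hωsum n, one_smul]
  -- key per-step inequality
  have key : ∀ k, ∀ z ∈ C, ‖x (k+1) - z‖ ^ 2 + α k * (2 - α k) * Sf k ≤ ‖x k - z‖ ^ 2 := by
    intro k z hz
    obtain ⟨v, hvdef⟩ : ∃ t : H, t = (∑ i ∈ Ik k, ω k i • P i (x k)) - x k := ⟨_, rfl⟩
    have hinner : ∀ i ∈ Ik k, ⟪x k - z, P i (x k) - x k⟫ ≤ -‖P i (x k) - x k‖ ^ 2 := by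
      intro i hi
      have hz' : z ∈ Cs i := hCsub i hz
      have h1 : ⟪x k - P i (x k), z - P i (x k)⟫ ≤ 0 :=
        dlp_proj_inner_le (hCscv i) (hP i (x k)).1 (hP i (x k)).2 hz'
      have h2 : ⟪x k - z, P i (x k) - x k⟫
          = ⟪x k - P i (x k), z - P i (x k)⟫ - ‖x k - P i (x k)‖ ^ 2 := by
        rw [show x k - z = (x k - P i (x k)) - (z - P i (x k)) by abel,
            show P i (x k) - x k = -(x k - P i (x k)) by abel,
            inner_neg_right, inner_sub_left, real_inner_self_eq_norm_sq,
            real_inner_comm (z - P i (x k))]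
        ring
      have h3 : ‖x k - P i (x k)‖ = ‖P i (x k) - x k‖ := norm_sub_rev _ _
      rw [h2, h3]; linarith
    have hinnersum : ⟪x k - z, v⟫ ≤ -Sf k := by
      rw [hvdef, ← hvsum k, inner_sum]
      have hterm : ∀ i ∈ Ik k,
          ⟪x k - z, ω k i • (P i (x k) - x k)⟫ ≤ ω k i * (-(‖P i (x k) - x k‖ ^ 2)) := by
        intro i hi
        rw [real_inner_smul_right]
        exact mul_le_mul_of_nonneg_left (hinner i hi) (hω0 k i hi)
      refine (Finset.sum_le_sum hterm).trans (le_of_eq ?_)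
      simp only [hSfdef, mul_neg, Finset.sum_neg_distrib]
    have hvnorm : ‖v‖ ^ 2 ≤ Sf k := by
      rw [hvdef, ← hvsum k, hSfdef]
      exact dlp_norm_sq_sum_le (Ik k) (ω k) (fun i => P i (x k) - x k)
        (fun i hi => hω0 k i hi) (hωsum k)
    have expand : ‖x (k+1) - z‖ ^ 2
        = ‖x k - z‖ ^ 2 + 2 * (α k * ⟪x k - z, v⟫) + (α k) ^ 2 * ‖v‖ ^ 2 := by
      rw [hrec k, ← hvdef, show x k + α k • v - z = (x k - z) + α k • v by abel,
          norm_add_sq_real, real_inner_smul_right, norm_smul, Real.norm_eq_abs,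
          abs_of_nonneg (hαpos k).le, mul_pow]
    have t1 : 2 * α k * ⟪x k - z, v⟫ ≤ 2 * α k * (-Sf k) :=
      mul_le_mul_of_nonneg_left hinnersum (by linarith [hαpos k])
    have t2 : (α k) ^ 2 * ‖v‖ ^ 2 ≤ (α k) ^ 2 * Sf k :=
      mul_le_mul_of_nonneg_left hvnorm (sq_nonneg _)
    rw [expand]
    linarith [t1, t2]
  -- Fejér monotonicity
  have mono : ∀ z ∈ C, ∀ n, ‖x (n+1) - z‖ ≤ ‖x n - z‖ := by
    intro z hz n
    have hk := key n z hz
    have hnn : 0 ≤ α n * (2 - α n) * Sf n :=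
      mul_nonneg (mul_nonneg (hαpos n).le (by linarith [hα2 n])) (hS0 n)
    exact dlp_le_of_sq_le_sq (norm_nonneg _) (by linarith) (norm_nonneg _)
  have mono' : ∀ z ∈ C, ∀ k n, k ≤ n → ‖x n - z‖ ≤ ‖x k - z‖ := by
    intro z hz k n hkn
    induction n, hkn using Nat.le_induction with
    | base => exact le_refl _
    | succ n hkn ih => exact (mono z hz n).trans ih
  have dmono : ∀ k n, k ≤ n → infDist (x n) C ≤ infDist (x k) C := by
    intro k n hkn
    obtain ⟨z, hz, hzeq⟩ := proj (x k)
    calc infDist (x n) C ≤ dist (x n) z := infDist_le_dist_of_mem hz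
      _ = ‖x n - z‖ := dist_eq_norm _ _
      _ ≤ ‖x k - z‖ := mono' z hz k n hkn
      _ = infDist (x k) C := hzeq
  have hball : ∀ k, ‖x k - x0p‖ ≤ r := fun k =>
    (mono' x0p hx0p 0 k (Nat.zero_le k)).trans_eq hx0pproj
  have hxkball : ∀ k, x k ∈ closedBall x0p r := by
    intro k; rw [mem_closedBall, dist_eq_norm]; exact hball k
  have hlin' : ∀ k, infDist (x k) C ≤
      κ * Finset.univ.sup' Finset.univ_nonempty fun i => infDist (x k) (Cs i) :=
    fun k => hlinreg (x k) (hxkball k)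
  have hsuple : ∀ k,
      (Finset.univ.sup' Finset.univ_nonempty fun i => infDist (x k) (Cs i))
        ≤ infDist (x k) C :=
    fun k => Finset.sup'_le _ _ fun i _ => hdle (x k) i
  have hsup0 : ∀ k, 0 ≤
      (Finset.univ.sup' Finset.univ_nonempty fun i => infDist (x k) (Cs i)) := by
    intro k
    obtain ⟨i⟩ : Nonempty (Fin m) := inferInstance
    exact infDist_nonneg.trans
      (Finset.le_sup' (fun i => infDist (x k) (Cs i)) (Finset.mem_univ i))
  have hκ1 : 1 ≤ κ := by
    have h1 := hlin' 0
    have h2 : κ * (Finset.univ.sup' Finset.univ_nonempty fun i => infDist (x 0) (Cs i))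
        ≤ κ * infDist (x 0) C := mul_le_mul_of_nonneg_left (hsuple 0) hκ.le
    rw [← hrdef] at h1 h2
    have h3 : r ≤ κ * r := h1.trans h2
    rcases le_or_gt 1 κ with h | h
    · exact h
    · exfalso
      have := mul_lt_mul_of_pos_right h hr
      linarith
  -- numeric preliminaries
  have hsposn : 0 < s := hs
  have hspos : (0:ℝ) < (s:ℝ) := by exact_mod_cast hsposn
  have hspos0 : (0:ℝ) < (s:ℝ) := by exact_mod_cast hs
  have hsα : (1:ℝ) ≤ (s:ℝ) * αplus := by
    have hs1 : (1:ℝ) ≤ (s:ℝ) := by exact_mod_cast hs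
    have := mul_le_mul hs1 hαp1 (by norm_num) (by linarith)
    linarith
  have h2αp : (0:ℝ) < 2 - αplus := by linarith
  have hsαpos : (0:ℝ) < (s:ℝ) * αplus := by linarith
  have hδ0 : 0 < ωminus * (2 - αplus) * αminus ^ 2 / ((s : ℝ) * αplus) :=
    div_pos (mul_pos (mul_pos hωm0 h2αp) (pow_pos hαm0 2)) hsαpos
  have hαmsq : αminus ^ 2 ≤ 1 := by
    have := mul_le_mul hαm1 hαm1 hαm0.le (by norm_num)
    linarith [this, sq αminus ▸ this]
  have hW1 : ωminus * (2 - αplus) * αminus ^ 2 ≤ 1 := by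
    have e1 : ωminus * (2 - αplus) ≤ 1 * 1 :=
      mul_le_mul hωm1 (by linarith) h2αp.le (by norm_num)
    have e2 : ωminus * (2 - αplus) * αminus ^ 2 ≤ 1 * 1 :=
      mul_le_mul (by linarith) hαmsq (sq_nonneg _) (by norm_num)
    linarith
  have hδ1 : ωminus * (2 - αplus) * αminus ^ 2 / ((s : ℝ) * αplus) ≤ 1 := by
    rw [div_le_one hsαpos]; linarith
  have hκsq : 1 ≤ κ ^ 2 := by
    have := mul_le_mul hκ1 hκ1 (by norm_num) (by linarith)
    linarith [this, sq κ ▸ this]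
  have hκsqpos : (0:ℝ) < κ ^ 2 := by positivity
  have hinvκ0 : (0:ℝ) < 1 / κ ^ 2 := by positivity
  have hinvκ : 1 / κ ^ 2 ≤ 1 := by rw [div_le_one hκsqpos]; exact hκsq
  obtain ⟨base, hbasedef⟩ : ∃ t : ℝ,
      t = 1 - ωminus * (2 - αplus) * αminus ^ 2 / ((s : ℝ) * αplus) * (1 / κ ^ 2) :=
    ⟨_, rfl⟩
  rw [← hbasedef]
  have hbase0 : 0 ≤ base := by
    rw [hbasedef]
    have u : ωminus * (2 - αplus) * αminus ^ 2 / ((s : ℝ) * αplus) * (1 / κ ^ 2)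
        ≤ 1 * 1 := mul_le_mul hδ1 hinvκ hinvκ0.le (by norm_num)
    linarith
  have hbase1 : base < 1 := by
    rw [hbasedef]
    linarith [mul_pos hδ0 hinvκ0]
  obtain ⟨q, hqdef⟩ : ∃ t : ℝ, t = base ^ ((1 : ℝ) / (2 * (s:ℝ))) := ⟨_, rfl⟩
  rw [← hqdef]
  have hq0 : 0 ≤ q := by rw [hqdef]; exact Real.rpow_nonneg hbase0 _
  have hq1 : q < 1 := by rw [hqdef]; exact Real.rpow_lt_one hbase0 hbase1 (by positivity)
  have hqpow : q ^ (2*s) = base := by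
    rw [hqdef, ← Real.rpow_natCast (base ^ ((1:ℝ)/(2*(s:ℝ)))) (2*s),
        ← Real.rpow_mul hbase0,
        show ((2*s : ℕ):ℝ) = 2*(s:ℝ) by push_cast; ring,
        one_div, inv_mul_cancel₀ (by positivity : (2*(s:ℝ)) ≠ 0), Real.rpow_one]
  have hqs : (q ^ s) ^ 2 = base := by
    rw [← pow_mul, mul_comm s 2, hqpow]
  have hqspos' : 1 < s → 0 < q := by
    intro hs2
    have hs2' : (2:ℝ) ≤ (s:ℝ) := by exact_mod_cast hs2
    have hδhalf : ωminus * (2 - αplus) * αminus ^ 2 / ((s : ℝ) * αplus) ≤ 1/2 := by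
      rw [div_le_iff₀ hsαpos]
      have v1 : (2:ℝ) * 1 ≤ (s:ℝ) * αplus := mul_le_mul hs2' hαp1 (by norm_num) hspos.le
      linarith
    have hbpos : 0 < base := by
      rw [hbasedef]
      have u : ωminus * (2 - αplus) * αminus ^ 2 / ((s : ℝ) * αplus) * (1 / κ ^ 2)
          ≤ 1/2 * 1 := mul_le_mul hδhalf hinvκ hinvκ0.le (by norm_num)
      linarith
    rw [hqdef]; exact Real.rpow_pos_of_pos hbpos _
  -- lower bound for decrease, upper bound for steps
  have hSM : ∀ n, ωminus * Mf n ^ 2 ≤ Sf n := by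
    intro n
    obtain ⟨i, hiI, hmax⟩ := hiii n
    have hMle' : Mf n ≤ infDist (x n) (Cs i) := by
      rw [hMfdef]; exact Finset.sup'_le _ _ hmax
    have h1 : Mf n ^ 2 ≤ infDist (x n) (Cs i) ^ 2 := pow_le_pow_left₀ (hM0 n) hMle' 2
    have hterm : ωminus * Mf n ^ 2 ≤ ω n i * ‖P i (x n) - x n‖ ^ 2 := by
      rw [hPd i (x n)]
      have u1 : ωminus * Mf n ^ 2 ≤ ωminus * infDist (x n) (Cs i) ^ 2 :=
        mul_le_mul_of_nonneg_left h1 hωm0.le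
      have u2 : ωminus * infDist (x n) (Cs i) ^ 2 ≤ ω n i * infDist (x n) (Cs i) ^ 2 :=
        mul_le_mul_of_nonneg_right (hω n i hiI).1 (sq_nonneg _)
      linarith
    rw [hSfdef]
    show _ ≤ ∑ i ∈ Ik n, ω n i * ‖P i (x n) - x n‖ ^ 2
    exact hterm.trans (Finset.single_le_sum
      (f := fun j => ω n j * ‖P j (x n) - x n‖ ^ 2)
      (fun j hj => mul_nonneg (hω0 n j hj) (sq_nonneg _)) hiI)
  have hstep : ∀ n, ‖x (n+1) - x n‖ ≤ α n * Mf n := by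
    intro n
    rw [hrec n, add_sub_cancel_left, norm_smul, Real.norm_eq_abs,
        abs_of_nonneg (hαpos n).le]
    refine mul_le_mul_of_nonneg_left ?_ (hαpos n).le
    rw [← hvsum n]
    refine (norm_sum_le _ _).trans ?_
    have hterm : ∀ i ∈ Ik n, ‖ω n i • (P i (x n) - x n)‖ ≤ ω n i * Mf n := by
      intro i hi
      rw [norm_smul, Real.norm_eq_abs, abs_of_nonneg (hω0 n i hi), hPd i (x n)]
      exact mul_le_mul_of_nonneg_left (hMle n i (hIJ n hi)) (hω0 n i hi)
    refine (Finset.sum_le_sum hterm).trans (le_of_eq ?_)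
    rw [← Finset.sum_mul, hωsum n, one_mul]
  -- telescoping
  have tele : ∀ z ∈ C, ∀ k l, ‖x (k+l) - z‖ ^ 2
      + ∑ j ∈ Finset.range l, α (k+j) * (2 - α (k+j)) * Sf (k+j) ≤ ‖x k - z‖ ^ 2 := by
    intro z hz k l
    induction l with
    | zero => simp
    | succ l ih =>
      have hk := key (k+l) z hz
      rw [show k + (l+1) = (k+l)+1 by omega, Finset.sum_range_succ]
      linarith
  -- the s-step contraction
  have hblock : ∀ k, infDist (x (k+s)) C ≤ q ^ s * infDist (x k) C := by
    intro k
    obtain ⟨z, hz, hzeq⟩ := proj (x k)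
    have per : ∀ j, (2 - αplus) * ωminus * (α (k+j) * Mf (k+j)) ^ 2
        ≤ αplus * (α (k+j) * (2 - α (k+j)) * Sf (k+j)) := by
      intro j
      have h1 := hSM (k+j)
      have hMsq : 0 ≤ ωminus * Mf (k+j) ^ 2 := mul_nonneg hωm0.le (sq_nonneg _)
      have step1 : (2 - αplus) * (ωminus * Mf (k+j) ^ 2)
          ≤ (2 - α (k+j)) * Sf (k+j) :=
        mul_le_mul (by linarith [(hα (k+j)).2]) h1 hMsq (by linarith [hα2 (k+j)])
      have step2 : α (k+j) * ((2 - αplus) * (ωminus * Mf (k+j) ^ 2))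
          ≤ α (k+j) * ((2 - α (k+j)) * Sf (k+j)) :=
        mul_le_mul_of_nonneg_left step1 (hαpos (k+j)).le
      have h3 : 0 ≤ α (k+j) * ((2 - αplus) * (ωminus * Mf (k+j) ^ 2)) :=
        mul_nonneg (hαpos (k+j)).le (mul_nonneg h2αp.le hMsq)
      have step3 : α (k+j) * (α (k+j) * ((2 - αplus) * (ωminus * Mf (k+j) ^ 2)))
          ≤ αplus * (α (k+j) * ((2 - α (k+j)) * Sf (k+j))) :=
        mul_le_mul (hα (k+j)).2 step2 h3 (by linarith)
      calc (2 - αplus) * ωminus * (α (k+j) * Mf (k+j)) ^ 2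
          = α (k+j) * (α (k+j) * ((2 - αplus) * (ωminus * Mf (k+j) ^ 2))) := by ring
        _ ≤ αplus * (α (k+j) * ((2 - α (k+j)) * Sf (k+j))) := step3
        _ = αplus * (α (k+j) * (2 - α (k+j)) * Sf (k+j)) := by ring
    have htele := tele z hz k s
    have hnormk : ‖x k - z‖ ^ 2 = infDist (x k) C ^ 2 := by rw [hzeq]
    have h2 : ∑ j ∈ Finset.range s, α (k+j) * (2 - α (k+j)) * Sf (k+j)
        ≤ infDist (x k) C ^ 2 - ‖x (k+s) - z‖ ^ 2 := by linarith
    have hsum1 : (2 - αplus) * ωminus * (∑ j ∈ Finset.range s, (α (k+j) * Mf (k+j)) ^ 2)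
        ≤ αplus * (infDist (x k) C ^ 2 - ‖x (k+s) - z‖ ^ 2) := by
      have h := Finset.sum_le_sum fun j (_ : j ∈ Finset.range s) => per j
      rw [← Finset.mul_sum, ← Finset.mul_sum] at h
      exact h.trans (mul_le_mul_of_nonneg_left h2 (by linarith))
    have hgnn : ∀ j, 0 ≤ α (k+j) * Mf (k+j) := fun j =>
      mul_nonneg (hαpos (k+j)).le (hM0 (k+j))
    have hone : ∀ i : Fin m, αminus * infDist (x k) (Cs i)
        ≤ ∑ j ∈ Finset.range s, α (k+j) * Mf (k+j) := by
      intro i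
      obtain ⟨l, hls, hiJ⟩ := hcover k i
      have hd1 : infDist (x k) (Cs i)
          ≤ infDist (x (k+l)) (Cs i) + dist (x k) (x (k+l)) :=
        infDist_le_infDist_add_dist
      have hd2 : dist (x k) (x (k+l)) ≤ ∑ j ∈ Finset.range l, α (k+j) * Mf (k+j) := by
        have h2 : ∀ j ∈ Finset.range l, dist (x (k+j)) (x (k+j+1)) ≤ α (k+j) * Mf (k+j) := by
          intro j _
          rw [dist_eq_norm, norm_sub_rev]
          exact hstep (k+j)
        calc dist (x k) (x (k+l))
            = dist ((fun j => x (k+j)) 0) ((fun j => x (k+j)) l) := rfl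
          _ ≤ ∑ j ∈ Finset.range l, dist (x (k+j)) (x (k+j+1)) :=
              dist_le_range_sum_dist (fun j => x (k+j)) l
          _ ≤ ∑ j ∈ Finset.range l, α (k+j) * Mf (k+j) := Finset.sum_le_sum h2
      have hd3 : infDist (x (k+l)) (Cs i) ≤ Mf (k+l) := hMle (k+l) i hiJ
      have hSnn : 0 ≤ ∑ j ∈ Finset.range l, α (k+j) * Mf (k+j) :=
        Finset.sum_nonneg fun j _ => hgnn j
      have hstep4 : αminus * Mf (k+l) ≤ α (k+l) * Mf (k+l) :=
        mul_le_mul_of_nonneg_right (hα (k+l)).1 (hM0 (k+l))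
      have h5 : αminus * infDist (x k) (Cs i)
          ≤ (∑ j ∈ Finset.range l, α (k+j) * Mf (k+j)) + α (k+l) * Mf (k+l) := by
        have hmul : αminus * infDist (x k) (Cs i)
            ≤ αminus * ((∑ j ∈ Finset.range l, α (k+j) * Mf (k+j)) + Mf (k+l)) :=
          mul_le_mul_of_nonneg_left (by linarith) hαm0.le
        have e7 : 0 ≤ (1 - αminus) * ∑ j ∈ Finset.range l, α (k+j) * Mf (k+j) :=
          mul_nonneg (by linarith) hSnn
        linarith [e7, hmul, hstep4]
      have h6 : (∑ j ∈ Finset.range l, α (k+j) * Mf (k+j)) + α (k+l) * Mf (k+l)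
          = ∑ j ∈ Finset.range (l+1), α (k+j) * Mf (k+j) :=
        (Finset.sum_range_succ _ l).symm
      have hsub : ∑ j ∈ Finset.range (l+1), α (k+j) * Mf (k+j)
          ≤ ∑ j ∈ Finset.range s, α (k+j) * Mf (k+j) :=
        Finset.sum_le_sum_of_subset_of_nonneg (Finset.range_subset_range.2 hls)
          (fun j _ _ => hgnn j)
      linarith
    have hmax : αminus * (Finset.univ.sup' Finset.univ_nonempty
          fun i => infDist (x k) (Cs i))
        ≤ ∑ j ∈ Finset.range s, α (k+j) * Mf (k+j) := by
      have hsup : (Finset.univ.sup' Finset.univ_nonempty fun i => infDist (x k) (Cs i))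
          ≤ (∑ j ∈ Finset.range s, α (k+j) * Mf (k+j)) / αminus := by
        refine Finset.sup'_le _ _ fun i _ => ?_
        rw [le_div_iff₀ hαm0]
        have := hone i
        linarith
      have := mul_le_mul_of_nonneg_left hsup hαm0.le
      calc αminus * (Finset.univ.sup' Finset.univ_nonempty
            fun i => infDist (x k) (Cs i))
          ≤ αminus * ((∑ j ∈ Finset.range s, α (k+j) * Mf (k+j)) / αminus) := this
        _ = ∑ j ∈ Finset.range s, α (k+j) * Mf (k+j) := by field_simp
    have hCS : (∑ j ∈ Finset.range s, α (k+j) * Mf (k+j)) ^ 2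
        ≤ (s:ℝ) * ∑ j ∈ Finset.range s, (α (k+j) * Mf (k+j)) ^ 2 := by
      have h := sq_sum_le_card_mul_sum_sq
        (s := Finset.range s) (f := fun j => α (k+j) * Mf (k+j))
      simpa [Finset.card_range] using h
    have c1 : (αminus * (Finset.univ.sup' Finset.univ_nonempty
          fun i => infDist (x k) (Cs i))) ^ 2
        ≤ (∑ j ∈ Finset.range s, α (k+j) * Mf (k+j)) ^ 2 :=
      pow_le_pow_left₀ (mul_nonneg hαm0.le (hsup0 k)) hmax 2
    have c4 : infDist (x k) C ^ 2 ≤ κ ^ 2 * (Finset.univ.sup' Finset.univ_nonempty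
          fun i => infDist (x k) (Cs i)) ^ 2 := by
      have u := pow_le_pow_left₀ infDist_nonneg (hlin' k) 2
      linarith [u]
    -- combine into the contraction estimate
    have c5 : (2 - αplus) * ωminus * (αminus ^ 2 * (Finset.univ.sup' Finset.univ_nonempty
          fun i => infDist (x k) (Cs i)) ^ 2)
        ≤ (s:ℝ) * αplus * (infDist (x k) C ^ 2 - ‖x (k+s) - z‖ ^ 2) := by
      have e1 : (2 - αplus) * ωminus * ((αminus * (Finset.univ.sup' Finset.univ_nonempty
            fun i => infDist (x k) (Cs i))) ^ 2)
          ≤ (2 - αplus) * ωminus * ((s:ℝ) * ∑ j ∈ Finset.range s, (α (k+j) * Mf (k+j)) ^ 2) :=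
        mul_le_mul_of_nonneg_left (c1.trans hCS) (mul_nonneg h2αp.le hωm0.le)
      have e3 : (s:ℝ) * ((2 - αplus) * ωminus *
            (∑ j ∈ Finset.range s, (α (k+j) * Mf (k+j)) ^ 2))
          ≤ (s:ℝ) * (αplus * (infDist (x k) C ^ 2 - ‖x (k+s) - z‖ ^ 2)) :=
        mul_le_mul_of_nonneg_left hsum1 hspos.le
      linarith [e1, e3]
    have hkey2 : (2 - αplus) * ωminus * αminus ^ 2 * infDist (x k) C ^ 2
        ≤ κ ^ 2 * ((s:ℝ) * αplus * (infDist (x k) C ^ 2 - ‖x (k+s) - z‖ ^ 2)) := by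
      have e4 : (2 - αplus) * ωminus * αminus ^ 2 * infDist (x k) C ^ 2
          ≤ (2 - αplus) * ωminus * αminus ^ 2 * (κ ^ 2 * (Finset.univ.sup'
              Finset.univ_nonempty fun i => infDist (x k) (Cs i)) ^ 2) :=
        mul_le_mul_of_nonneg_left c4
          (mul_nonneg (mul_nonneg h2αp.le hωm0.le) (sq_nonneg _))
      have e6 : κ ^ 2 * ((2 - αplus) * ωminus * (αminus ^ 2 * (Finset.univ.sup'
              Finset.univ_nonempty fun i => infDist (x k) (Cs i)) ^ 2))
          ≤ κ ^ 2 * ((s:ℝ) * αplus * (infDist (x k) C ^ 2 - ‖x (k+s) - z‖ ^ 2)) :=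
        mul_le_mul_of_nonneg_left c5 (sq_nonneg κ)
      linarith [e4, e6]
    have hD : (0:ℝ) < (s:ℝ) * αplus * κ ^ 2 := by positivity
    have hEb : ‖x (k+s) - z‖ ^ 2 ≤ base * infDist (x k) C ^ 2 := by
      have heq : base * infDist (x k) C ^ 2 = infDist (x k) C ^ 2
          - (ωminus * (2 - αplus) * αminus ^ 2 * infDist (x k) C ^ 2)
              / ((s:ℝ) * αplus * κ ^ 2) := by
        rw [hbasedef]; field_simp
      have hT : (ωminus * (2 - αplus) * αminus ^ 2 * infDist (x k) C ^ 2)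
            / ((s:ℝ) * αplus * κ ^ 2)
          ≤ infDist (x k) C ^ 2 - ‖x (k+s) - z‖ ^ 2 := by
        rw [div_le_iff₀ hD]; linarith [hkey2]
      rw [heq]; linarith
    have hd'le : infDist (x (k+s)) C ≤ ‖x (k+s) - z‖ :=
      (infDist_le_dist_of_mem hz).trans_eq (dist_eq_norm _ _)
    refine dlp_le_of_sq_le_sq (mul_nonneg (pow_nonneg hq0 s) infDist_nonneg) ?_
      infDist_nonneg
    calc infDist (x (k+s)) C ^ 2 ≤ ‖x (k+s) - z‖ ^ 2 :=
          pow_le_pow_left₀ infDist_nonneg hd'le 2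
      _ ≤ base * infDist (x k) C ^ 2 := hEb
      _ = (q ^ s * infDist (x k) C) ^ 2 := by rw [mul_pow, hqs]
  -- geometric decay along multiples of s
  have hgeo : ∀ n, infDist (x (s*n)) C ≤ q ^ (s*n) * r := by
    intro n
    induction n with
    | zero => simpa using le_of_eq hrdef.symm
    | succ n ih =>
      have h1 := hblock (s*n)
      rw [show s*(n+1) = s*n + s by ring]
      calc infDist (x (s*n + s)) C ≤ q ^ s * infDist (x (s*n)) C := h1
        _ ≤ q ^ s * (q ^ (s*n) * r) :=
            mul_le_mul_of_nonneg_left ih (pow_nonneg hq0 s)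
        _ = q ^ (s*n + s) * r := by rw [pow_add]; ring
  -- master bound
  have hmaster : ∀ k, infDist (x k) C ≤ r / q ^ (s-1) * q ^ k := by
    intro k
    have hle1 : s * (k / s) ≤ k := by
      calc s * (k / s) = k / s * s := mul_comm _ _
        _ ≤ k := Nat.div_mul_le_self k s
    have h1 : infDist (x k) C ≤ q ^ (s*(k/s)) * r :=
      (dmono (s*(k/s)) k hle1).trans (hgeo (k/s))
    rcases eq_or_lt_of_le hs with hs1 | hs2
    · have hs1' : s = 1 := hs1.symm
      rw [hs1'] at h1 ⊢
      simp only [one_mul, Nat.div_one] at h1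
      rw [show (1:ℕ) - 1 = 0 from rfl, pow_zero, div_one]
      linarith [h1]
    · have hqpos := hqspos' hs2
      have hexp : k ≤ s*(k/s) + (s-1) := by
        have hdm := Nat.div_add_mod k s
        have hm : k % s < s := Nat.mod_lt _ (by omega)
        omega
      have h2 : q ^ (s*(k/s)) * q ^ (s-1) ≤ q ^ k := by
        rw [← pow_add]
        exact pow_le_pow_of_le_one hq0 hq1.le hexp
      have hqs1 : 0 < q ^ (s-1) := pow_pos hqpos _
      have h3 : q ^ (s*(k/s)) ≤ q ^ k / q ^ (s-1) := (le_div_iff₀ hqs1).2 h2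
      calc infDist (x k) C ≤ q ^ (s*(k/s)) * r := h1
        _ ≤ (q ^ k / q ^ (s-1)) * r := mul_le_mul_of_nonneg_right h3 hr.le
        _ = r / q ^ (s-1) * q ^ k := by ring
  have hrq : 0 ≤ r / q ^ (s-1) := div_nonneg hr.le (pow_nonneg hq0 _)
  -- Cauchy sequence
  have hdist2 : ∀ k n, k ≤ n → ‖x n - x k‖ ≤ 2 * infDist (x k) C := by
    intro k n hkn
    obtain ⟨z, hz, hzeq⟩ := proj (x k)
    calc ‖x n - x k‖ = ‖(x n - z) - (x k - z)‖ := by rw [sub_sub_sub_cancel_right]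
      _ ≤ ‖x n - z‖ + ‖x k - z‖ := norm_sub_le _ _
      _ ≤ ‖x k - z‖ + ‖x k - z‖ := by linarith [mono' z hz k n hkn]
      _ = 2 * infDist (x k) C := by rw [hzeq]; ring
  have hcauchy : CauchySeq x := by
    refine cauchySeq_of_le_tendsto_0 (fun N => 4 * (r / q ^ (s-1) * q ^ N)) ?_ ?_
    · intro n mm N hn hm
      have h1 : dist (x n) (x mm) ≤ dist (x n) (x N) + dist (x N) (x mm) :=
        dist_triangle _ _ _
      have h2 : dist (x n) (x N) ≤ 2 * infDist (x N) C := by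
        rw [dist_eq_norm]; exact hdist2 N n hn
      have h3 : dist (x N) (x mm) ≤ 2 * infDist (x N) C := by
        rw [dist_comm, dist_eq_norm]; exact hdist2 N mm hm
      have h4 := hmaster N
      linarith
    · have h := (tendsto_pow_atTop_nhds_zero_of_lt_one hq0 hq1).const_mul
        (4 * (r / q ^ (s-1)))
      simpa [mul_assoc] using h
  obtain ⟨xinf, hxlim⟩ := cauchySeq_tendsto_of_complete hcauchy
  have hxkinf : ∀ k, ‖x k - xinf‖ ≤ 2 * infDist (x k) C := by
    intro k
    have hten : Tendsto (fun n => ‖x k - x n‖) atTop (𝓝 ‖x k - xinf‖) :=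
      (hxlim.const_sub (x k)).norm
    refine le_of_tendsto hten (eventually_atTop.2 ⟨k, fun n hn => ?_⟩)
    rw [norm_sub_rev]; exact hdist2 k n hn
  have hxinfC : xinf ∈ C := by
    have h0 : ∀ k, infDist xinf C ≤ 3 * (r / q ^ (s-1) * q ^ k) := by
      intro k
      have h1 : infDist xinf C ≤ infDist (x k) C + dist xinf (x k) :=
        infDist_le_infDist_add_dist
      have h2 : dist xinf (x k) = ‖x k - xinf‖ := by rw [dist_comm, dist_eq_norm]
      have h3 := hxkinf k
      have h4 := hmaster k
      linarith
    have hten : Tendsto (fun k : ℕ => 3 * (r / q ^ (s-1) * q ^ k)) atTop (𝓝 0) := by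
      have h := (tendsto_pow_atTop_nhds_zero_of_lt_one hq0 hq1).const_mul
        (3 * (r / q ^ (s-1)))
      simpa [mul_assoc] using h
    have hle0 : infDist xinf C ≤ 0 := ge_of_tendsto' hten h0
    have h00 : infDist xinf C = 0 := le_antisymm hle0 infDist_nonneg
    exact (hCcl.mem_iff_infDist_zero hC).2 h00
  refine ⟨xinf, hxinfC, ?_, ?_⟩
  · intro k
    calc ‖x k - xinf‖ ≤ 2 * infDist (x k) C := hxkinf k
      _ ≤ 2 * (r / q ^ (s-1) * q ^ k) := by linarith [hmaster k]
      _ = 2 * r / q ^ (s-1) * q ^ k := by ring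
  · intro k
    constructor
    · have h1 := hxkinf k
      have h2 := hlin' k
      rw [div_mul_eq_mul_div, div_le_iff₀ (by positivity : (0:ℝ) < 2*κ), one_mul]
      linarith [h1, h2]
    · have hA : 0 ≤ r / q ^ (s-1) * q ^ k :=
        mul_nonneg hrq (pow_nonneg hq0 k)
      have hA2 : 2 * r / q ^ (s-1) * q ^ k = 2 * (r / q ^ (s-1) * q ^ k) := by ring
      calc (Finset.univ.sup' Finset.univ_nonempty fun i => infDist (x k) (Cs i))
          ≤ infDist (x k) C := hsuple k
        _ ≤ r / q ^ (s-1) * q ^ k := hmaster k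
        _ ≤ 2 * r / q ^ (s-1) * q ^ k := by rw [hA2]; linarith [hA]
end

section
/- For each i ∈ I = {1,…,m}, let f_i : H → ℝ be convex and continuous with C := ⋂_{i∈I} S(f_i, 0) ≠ ∅, and let {x^k} be generated by the double-layer subgradient projection algorithm x^{k+1} := x^k + α_k(Σ_{i∈I_k} ω_i^k P_{f_i} x^k − x^k) under conditions (i) and (ii), and assume: (iii) if lim_{k→∞} max_{i∈I_k} ‖P_{f_i} x^k − x^k‖ = 0 then lim_{k→∞} max_{j∈J_k} ‖P_{f_j} x^k − x^k‖ = 0; (iv) each f_i is Lipschitz continuous on bounded sets. Then {x^k} converges weakly to some point x^∞ ∈ C. -/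
/-!
Each subgradient projection `P_i` is a cutter for `S(f_i, 0)`: `⟪x - z, P_i x - x⟫ ≤ -‖P_i x - x‖²`
whenever `f_i z ≤ 0`. A relaxed average of cutters therefore decreases `‖x^k - z‖²` by at least
`α⁻ (2 - α⁺) ∑ ω_i^k ‖P_i x^k - x^k‖²` for every `z ∈ C`, so the iterates are Fejér monotone with
respect to `C` and both the residuals on `I_k` and the steps `‖x^{k+1} - x^k‖` vanish.
Condition (iii) moves the residuals to `J_k`. Near the bounded orbit `f_i` is `L`-Lipschitz, so its
subgradients have norm at most `L` and `f_i x ≤ L ‖P_i x - x‖`; as `i` belongs to one of `s`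
consecutive `J_k` and the steps vanish, `limsup f_i(x^k) ≤ 0`. The subgradient inequality at a weak
cluster point `p` then gives `f_i p ≤ 0`, and Opial's argument (Fejér monotonicity plus weak cluster
points in `C`) yields weak convergence.
-/

open Filter Metric Bornology RealInnerProductSpace

/-- The subgradient projection associated with `f` and a subgradient selection `g`. -/
noncomputable def subgradProj {E : Type*} [NormedAddCommGroup E] [InnerProductSpace ℝ E]
    (f : E → ℝ) (g : E → E) : E → E := fun x =>
  if 0 < f x then x - (f x / ‖g x‖ ^ 2) • g x else x

open scoped Topology NNReal

section Subgradient

variable {E : Type*} [NormedAddCommGroup E] [InnerProductSpace ℝ E] {f : E → ℝ} {g : E → E}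

lemma subgrad_ne_zero_of_pos (hsub : ∀ y z, f y + ⟪g y, z - y⟫ ≤ f z) {x z : E} (hz : f z ≤ 0)
    (hx : 0 < f x) : g x ≠ 0 := by
  intro h
  have := hsub x z
  rw [h, inner_zero_left] at this
  linarith

lemma inner_sub_subgradProj_sub_le (hsub : ∀ y z, f y + ⟪g y, z - y⟫ ≤ f z) {z : E}
    (hz : f z ≤ 0) (x : E) :
    ⟪x - z, subgradProj f g x - x⟫ ≤ -‖subgradProj f g x - x‖ ^ 2 := by
  unfold subgradProj
  split_ifs with hx
  · have hg : 0 < ‖g x‖ := norm_pos_iff.2 (subgrad_ne_zero_of_pos hsub hz hx)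
    set t := f x / ‖g x‖ ^ 2
    have htg : t * ‖g x‖ ^ 2 = f x := div_mul_cancel₀ _ (by positivity)
    have ht : 0 ≤ t := by positivity
    have hgz : ⟪g x, z - x⟫ ≤ -f x := by linarith [hsub x z]
    rw [sub_sub_cancel_left, inner_neg_right, real_inner_smul_right, norm_neg, norm_smul,
      Real.norm_of_nonneg ht, ← neg_sub z x, inner_neg_left, real_inner_comm]
    nlinarith [mul_le_mul_of_nonneg_left hgz ht]
  · simp

lemma apply_le_norm_mul_norm_subgradProj_sub (hsub : ∀ y z, f y + ⟪g y, z - y⟫ ≤ f z) {z : E}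
    (hz : f z ≤ 0) (x : E) : f x ≤ ‖g x‖ * ‖subgradProj f g x - x‖ := by
  unfold subgradProj
  split_ifs with hx
  · have hg : 0 < ‖g x‖ := norm_pos_iff.2 (subgrad_ne_zero_of_pos hsub hz hx)
    rw [sub_sub_cancel_left, norm_neg, norm_smul, Real.norm_of_nonneg (by positivity)]
    exact le_of_eq (by field_simp)
  · simp only [sub_self, norm_zero, mul_zero]
    exact not_lt.1 hx

lemma norm_subgrad_le_of_lipschitzOnWith (hsub : ∀ y z, f y + ⟪g y, z - y⟫ ≤ f z) {L : ℝ≥0}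
    {x : E} (hf : LipschitzOnWith L f (closedBall x 1)) : ‖g x‖ ≤ L := by
  rcases eq_or_ne (g x) 0 with hg | hg
  · simp [hg]
  have hg' : 0 < ‖g x‖ := norm_pos_iff.2 hg
  set w := x + ‖g x‖⁻¹ • g x
  have hwx : ‖w - x‖ = 1 := by
    rw [add_sub_cancel_left, norm_smul, norm_inv, norm_norm, inv_mul_cancel₀ hg'.ne']
  have hinner : ⟪g x, w - x⟫ = ‖g x‖ := by
    rw [add_sub_cancel_left, real_inner_smul_right, real_inner_self_eq_norm_sq, pow_two,
      inv_mul_cancel_left₀ hg'.ne']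
  have hlip : f w - f x ≤ L := by
    have := hf.dist_le_mul w (by rw [mem_closedBall, dist_eq_norm, hwx]) x
      (mem_closedBall_self zero_le_one)
    rw [Real.dist_eq, dist_eq_norm, hwx, mul_one] at this
    exact (le_abs_self _).trans this
  linarith [hsub x w]

lemma apply_le_mul_norm_subgradProj_sub_of_lipschitzOnWith
    (hsub : ∀ y z, f y + ⟪g y, z - y⟫ ≤ f z) {z : E} (hz : f z ≤ 0) {L : ℝ≥0} {x : E}
    (hf : LipschitzOnWith L f (closedBall x 1)) : f x ≤ L * ‖subgradProj f g x - x‖ :=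
  (apply_le_norm_mul_norm_subgradProj_sub hsub hz x).trans
    (mul_le_mul_of_nonneg_right (norm_subgrad_le_of_lipschitzOnWith hsub hf) (norm_nonneg _))

end Subgradient

section RelaxedAverage

variable {ι E : Type*} [NormedAddCommGroup E] [InnerProductSpace ℝ E] {s : Finset ι} {ω : ι → ℝ}

lemma sum_smul_sub_eq_sum_smul_sub (hω : ∑ i ∈ s, ω i = 1) (y : ι → E) (x : E) :
    ∑ i ∈ s, ω i • y i - x = ∑ i ∈ s, ω i • (y i - x) := by
  simp only [smul_sub, Finset.sum_sub_distrib, ← Finset.sum_smul, hω, one_smul]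

lemma norm_sum_smul_sub_le_sup' (hs : s.Nonempty) (hω0 : ∀ i ∈ s, 0 ≤ ω i)
    (hω : ∑ i ∈ s, ω i = 1) (y : ι → E) (x : E) :
    ‖∑ i ∈ s, ω i • y i - x‖ ≤ s.sup' hs fun i => ‖y i - x‖ := by
  rw [sum_smul_sub_eq_sum_smul_sub hω]
  calc ‖∑ i ∈ s, ω i • (y i - x)‖ ≤ ∑ i ∈ s, ω i * ‖y i - x‖ := by
        refine (norm_sum_le _ _).trans_eq (Finset.sum_congr rfl fun i hi => ?_)
        rw [norm_smul, Real.norm_of_nonneg (hω0 i hi)]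
    _ ≤ ∑ i ∈ s, ω i * s.sup' hs fun i => ‖y i - x‖ :=
        Finset.sum_le_sum fun i hi =>
          mul_le_mul_of_nonneg_left (Finset.le_sup' (fun i => ‖y i - x‖) hi) (hω0 i hi)
    _ = s.sup' hs fun i => ‖y i - x‖ := by rw [← Finset.sum_mul, hω, one_mul]

lemma norm_relaxed_average_sub_sq_le (hω0 : ∀ i ∈ s, 0 ≤ ω i) (hω : ∑ i ∈ s, ω i = 1)
    {y : ι → E} {x z : E} (hy : ∀ i ∈ s, ⟪x - z, y i - x⟫ ≤ -‖y i - x‖ ^ 2) {α : ℝ}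
    (hα : 0 ≤ α) :
    ‖x + α • (∑ i ∈ s, ω i • y i - x) - z‖ ^ 2 ≤
      ‖x - z‖ ^ 2 - α * (2 - α) * ∑ i ∈ s, ω i * ‖y i - x‖ ^ 2 := by
  rw [sum_smul_sub_eq_sum_smul_sub hω]
  set u := ∑ i ∈ s, ω i • (y i - x)
  set Q := ∑ i ∈ s, ω i * ‖y i - x‖ ^ 2
  have hinner : ⟪x - z, u⟫ ≤ -Q := by
    rw [inner_sum, ← Finset.sum_neg_distrib]
    refine Finset.sum_le_sum fun i hi => ?_
    rw [real_inner_smul_right, ← mul_neg]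
    exact mul_le_mul_of_nonneg_left (hy i hi) (hω0 i hi)
  have hnorm : ‖u‖ ^ 2 ≤ Q :=
    ((convexOn_norm convex_univ).pow (fun _ _ => norm_nonneg _) 2).map_sum_le hω0 hω
      fun _ _ => Set.mem_univ _
  calc ‖x + α • u - z‖ ^ 2 = ‖x - z‖ ^ 2 + 2 * α * ⟪x - z, u⟫ + α ^ 2 * ‖u‖ ^ 2 := by
        rw [add_sub_right_comm, norm_add_sq_real, real_inner_smul_right, norm_smul,
          Real.norm_eq_abs, mul_pow, sq_abs]
        ring
    _ ≤ ‖x - z‖ ^ 2 - α * (2 - α) * Q := by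
        nlinarith [mul_le_mul_of_nonneg_left hinner hα,
          mul_le_mul_of_nonneg_left hnorm (sq_nonneg α)]

end RelaxedAverage

lemma tendsto_zero_of_le_sub_mul {a q : ℕ → ℝ} {c : ℝ} (hc : 0 < c) (ha : ∀ k, 0 ≤ a k)
    (hq : ∀ k, 0 ≤ q k) (h : ∀ k, a (k + 1) ≤ a k - c * q k) : Tendsto q atTop (𝓝 0) := by
  have hanti : Antitone a :=
    antitone_nat_of_succ_le fun k => (h k).trans (sub_le_self _ (mul_nonneg hc.le (hq k)))
  have hlim := tendsto_atTop_ciInf hanti ⟨0, by rintro _ ⟨k, rfl⟩; exact ha k⟩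
  have hdiff : Tendsto (fun k => (a k - a (k + 1)) / c) atTop (𝓝 0) := by
    simpa using (hlim.sub (hlim.comp (tendsto_add_atTop_nat 1))).div_const c
  exact squeeze_zero hq (fun k => by rw [le_div_iff₀ hc]; linarith [h k]) hdiff

lemma tendsto_sup'_of_tendsto_sum_mul_sq {ι : Type*} {I : ℕ → Finset ι}
    (hI : ∀ k, (I k).Nonempty) {ω : ℕ → ι → ℝ} {ωmin : ℝ} (hωmin : 0 < ωmin)
    (hω : ∀ k, ∀ i ∈ I k, ωmin ≤ ω k i) {a : ℕ → ι → ℝ} (ha : ∀ k i, 0 ≤ a k i)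
    (h : Tendsto (fun k => ∑ i ∈ I k, ω k i * a k i ^ 2) atTop (𝓝 0)) :
    Tendsto (fun k => (I k).sup' (hI k) (a k)) atTop (𝓝 0) := by
  have hbound : ∀ k, (I k).sup' (hI k) (a k) ≤ √((∑ i ∈ I k, ω k i * a k i ^ 2) / ωmin) := by
    intro k
    obtain ⟨i, hi, hmax⟩ := Finset.exists_mem_eq_sup' (hI k) (a k)
    rw [hmax]
    refine Real.le_sqrt_of_sq_le ((le_div_iff₀ hωmin).2 ?_)
    calc a k i ^ 2 * ωmin ≤ ω k i * a k i ^ 2 := by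
          rw [mul_comm]; exact mul_le_mul_of_nonneg_right (hω k i hi) (sq_nonneg _)
      _ ≤ ∑ j ∈ I k, ω k j * a k j ^ 2 :=
        Finset.single_le_sum (f := fun j => ω k j * a k j ^ 2)
          (fun j hj => mul_nonneg (hωmin.le.trans (hω k j hj)) (sq_nonneg _)) hi
  have hsqrt : Tendsto (fun k => √((∑ i ∈ I k, ω k i * a k i ^ 2) / ωmin)) atTop (𝓝 0) := by
    simpa using (h.div_const ωmin).sqrt
  exact squeeze_zero (fun k => let ⟨i, hi⟩ := hI k; (ha k i).trans (Finset.le_sup' _ hi))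
    hbound hsqrt

structure IsRelaxedAverageIteration {ι E : Type*} [NormedAddCommGroup E] [InnerProductSpace ℝ E]
    (T : ι → E → E) (I : ℕ → Finset ι) (α : ℕ → ℝ) (ω : ℕ → ι → ℝ) (αmin αmax ωmin : ℝ)
    (x : ℕ → E) : Prop where
  αmin_pos : 0 < αmin
  αmax_lt_two : αmax < 2
  α_mem : ∀ k, α k ∈ Set.Icc αmin αmax
  ωmin_pos : 0 < ωmin
  ωmin_le : ∀ k, ∀ i ∈ I k, ωmin ≤ ω k i
  sum_ω : ∀ k, ∑ i ∈ I k, ω k i = 1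
  succ_eq : ∀ k, x (k + 1) = x k + α k • (∑ i ∈ I k, ω k i • T i (x k) - x k)

namespace IsRelaxedAverageIteration

variable {ι E : Type*} [NormedAddCommGroup E] [InnerProductSpace ℝ E] {T : ι → E → E}
  {I : ℕ → Finset ι} {α : ℕ → ℝ} {ω : ℕ → ι → ℝ} {αmin αmax ωmin : ℝ} {x : ℕ → E}

lemma α_nonneg (hx : IsRelaxedAverageIteration T I α ω αmin αmax ωmin x) (k : ℕ) : 0 ≤ α k :=
  hx.αmin_pos.le.trans (hx.α_mem k).1

lemma ω_nonneg (hx : IsRelaxedAverageIteration T I α ω αmin αmax ωmin x) (k : ℕ) :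
    ∀ i ∈ I k, 0 ≤ ω k i := fun i hi => hx.ωmin_pos.le.trans (hx.ωmin_le k i hi)

lemma gap_pos (hx : IsRelaxedAverageIteration T I α ω αmin αmax ωmin x) :
    0 < αmin * (2 - αmax) :=
  mul_pos hx.αmin_pos (by linarith [hx.αmax_lt_two])

lemma sum_mul_sq_nonneg (hx : IsRelaxedAverageIteration T I α ω αmin αmax ωmin x) (k : ℕ) :
    0 ≤ ∑ i ∈ I k, ω k i * ‖T i (x k) - x k‖ ^ 2 :=
  Finset.sum_nonneg fun i hi => mul_nonneg (hx.ω_nonneg k i hi) (sq_nonneg _)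

lemma norm_succ_sub_sq_le (hx : IsRelaxedAverageIteration T I α ω αmin αmax ωmin x) {z : E}
    (hT : ∀ i y, ⟪y - z, T i y - y⟫ ≤ -‖T i y - y‖ ^ 2) (k : ℕ) :
    ‖x (k + 1) - z‖ ^ 2 ≤
      ‖x k - z‖ ^ 2 - αmin * (2 - αmax) * ∑ i ∈ I k, ω k i * ‖T i (x k) - x k‖ ^ 2 := by
  have hα := hx.α_mem k
  have hgap : αmin * (2 - αmax) ≤ α k * (2 - α k) :=
    mul_le_mul hα.1 (by linarith [hα.2]) (by linarith [hx.αmax_lt_two]) (hx.α_nonneg k)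
  rw [hx.succ_eq k]
  refine (norm_relaxed_average_sub_sq_le (hx.ω_nonneg k) (hx.sum_ω k) (fun i _ => hT i (x k))
    (hx.α_nonneg k)).trans ?_
  linarith [mul_le_mul_of_nonneg_right hgap (hx.sum_mul_sq_nonneg k)]

lemma antitone_norm_sub (hx : IsRelaxedAverageIteration T I α ω αmin αmax ωmin x) {z : E}
    (hT : ∀ i y, ⟪y - z, T i y - y⟫ ≤ -‖T i y - y‖ ^ 2) : Antitone fun k => ‖x k - z‖ :=
  antitone_nat_of_succ_le fun k =>
    (pow_le_pow_iff_left₀ (norm_nonneg _) (norm_nonneg _) two_ne_zero).1 <|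
      (hx.norm_succ_sub_sq_le hT k).trans
        (sub_le_self _ (mul_nonneg hx.gap_pos.le (hx.sum_mul_sq_nonneg k)))

lemma tendsto_sup'_norm_sub (hx : IsRelaxedAverageIteration T I α ω αmin αmax ωmin x)
    (hI : ∀ k, (I k).Nonempty) {z : E} (hT : ∀ i y, ⟪y - z, T i y - y⟫ ≤ -‖T i y - y‖ ^ 2) :
    Tendsto (fun k => (I k).sup' (hI k) fun i => ‖T i (x k) - x k‖) atTop (𝓝 0) :=
  tendsto_sup'_of_tendsto_sum_mul_sq hI hx.ωmin_pos hx.ωmin_le (fun _ _ => norm_nonneg _) <|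
    tendsto_zero_of_le_sub_mul (a := fun k => ‖x k - z‖ ^ 2) hx.gap_pos (fun _ => sq_nonneg _)
      hx.sum_mul_sq_nonneg (hx.norm_succ_sub_sq_le hT)

lemma tendsto_dist_succ (hx : IsRelaxedAverageIteration T I α ω αmin αmax ωmin x)
    (hI : ∀ k, (I k).Nonempty)
    (h : Tendsto (fun k => (I k).sup' (hI k) fun i => ‖T i (x k) - x k‖) atTop (𝓝 0)) :
    Tendsto (fun k => dist (x k) (x (k + 1))) atTop (𝓝 0) := by
  refine squeeze_zero (fun _ => dist_nonneg) (fun k => ?_) (by simpa using h.const_mul 2)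
  rw [dist_comm, dist_eq_norm, hx.succ_eq k, add_sub_cancel_left, norm_smul,
    Real.norm_of_nonneg (hx.α_nonneg k)]
  exact mul_le_mul (by linarith [(hx.α_mem k).2, hx.αmax_lt_two])
    (norm_sum_smul_sub_le_sup' (hI k) (hx.ω_nonneg k) (hx.sum_ω k) _ _) (norm_nonneg _)
    zero_le_two

end IsRelaxedAverageIteration

lemma apply_le_mul_sum_of_lipschitzOnWith {E : Type*} [PseudoMetricSpace E] {φ : E → ℝ}
    {S : Set E} {L : ℝ≥0} (hφ : LipschitzOnWith L φ S) {x : ℕ → E} (hx : ∀ k, x k ∈ S) {e : ℕ → ℝ}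
    (he : ∀ k, 0 ≤ e k) {s k l : ℕ} (hl : l < s) (hφl : φ (x (k + l)) ≤ L * e (k + l)) :
    φ (x k) ≤ L * ∑ j ∈ Finset.range s, (e (k + j) + dist (x (k + j)) (x (k + j + 1))) := by
  have hdist : dist (x k) (x (k + l)) ≤ ∑ j ∈ Finset.range s, dist (x (k + j)) (x (k + j + 1)) :=
    (dist_le_range_sum_dist (fun j => x (k + j)) l).trans
      (Finset.sum_le_sum_of_subset_of_nonneg (Finset.range_mono hl.le)
        fun _ _ _ => dist_nonneg)
  have he_le : e (k + l) ≤ ∑ j ∈ Finset.range s, e (k + j) :=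
    Finset.single_le_sum (fun j _ => he (k + j)) (Finset.mem_range.2 hl)
  have hlip : φ (x k) - φ (x (k + l)) ≤ L * dist (x k) (x (k + l)) :=
    (le_abs_self _).trans (hφ.dist_le_mul _ (hx k) _ (hx (k + l)))
  rw [Finset.sum_add_distrib, mul_add]
  linarith [mul_le_mul_of_nonneg_left hdist L.coe_nonneg,
    mul_le_mul_of_nonneg_left he_le L.coe_nonneg]

lemma exists_tendsto_zero_apply_le_of_subgradProj_window {E : Type*} [NormedAddCommGroup E]
    [InnerProductSpace ℝ E] {f : E → ℝ} {g : E → E} (hsub : ∀ y z, f y + ⟪g y, z - y⟫ ≤ f z)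
    {z : E} (hz : f z ≤ 0) {L : ℝ≥0} {S : Set E} (hf : LipschitzOnWith L f S) {x : ℕ → E}
    (hx : ∀ k, closedBall (x k) 1 ⊆ S)
    (hstep : Tendsto (fun k => dist (x k) (x (k + 1))) atTop (𝓝 0)) {e : ℕ → ℝ}
    (he0 : ∀ k, 0 ≤ e k) (he : Tendsto e atTop (𝓝 0)) {s : ℕ}
    (hwin : ∀ k, ∃ l < s, ‖subgradProj f g (x (k + l)) - x (k + l)‖ ≤ e (k + l)) :
    ∃ b : ℕ → ℝ, Tendsto b atTop (𝓝 0) ∧ ∀ k, f (x k) ≤ b k := by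
  refine ⟨fun k => L * ∑ j ∈ Finset.range s, (e (k + j) + dist (x (k + j)) (x (k + j + 1))),
    ?_, fun k => ?_⟩
  · simpa using (tendsto_finsetSum _ fun j _ =>
      (he.add hstep).comp (tendsto_add_atTop_nat j)).const_mul (L : ℝ)
  obtain ⟨l, hl, hel⟩ := hwin k
  refine apply_le_mul_sum_of_lipschitzOnWith hf (fun k => hx k (mem_closedBall_self zero_le_one))
    he0 hl ?_
  exact (apply_le_mul_norm_subgradProj_sub_of_lipschitzOnWith hsub hz (hf.mono (hx _))).trans
    (mul_le_mul_of_nonneg_left hel L.coe_nonneg)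

section WeakConvergence

variable {α H : Type*} [NormedAddCommGroup H] [InnerProductSpace ℝ H]

def TendstoWeakly (u : α → H) (l : Filter α) (p : H) : Prop :=
  ∀ w, Tendsto (fun k => ⟪u k, w⟫) l (𝓝 ⟪p, w⟫)

lemma exists_tendstoWeakly_of_isBounded [CompleteSpace H] (U : Ultrafilter α) {u : α → H}
    (hu : IsBounded (Set.range u)) : ∃ p, TendstoWeakly u U p := by
  obtain ⟨R, hR⟩ := isBounded_iff_forall_norm_le.1 hu
  set T := InnerProductSpace.toDual ℝ H
  obtain ⟨φ, -, hφ⟩ := (WeakDual.isCompact_closedBall (𝕜 := ℝ) 0 R).ultrafilter_le_nhds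
    (U.map fun k => StrongDual.toWeakDual (T (u k))) <| by
      rw [Ultrafilter.coe_map, le_principal_iff, mem_map]
      refine univ_mem' fun k => ?_
      simpa [T] using hR _ ⟨k, rfl⟩
  refine ⟨T.symm (WeakDual.toStrongDual φ), fun w => ?_⟩
  have := ((WeakDual.eval_continuous w).tendsto φ).comp hφ
  simpa [T, Function.comp_def] using this

lemma TendstoWeakly.eq_of_tendsto_norm_sub {l U V : Filter α} [U.NeBot] [V.NeBot]
    (hU : U ≤ l) (hV : V ≤ l) {u : α → H} {p q : H}
    (hp : TendstoWeakly u U p) (hq : TendstoWeakly u V q)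
    {dp dq : ℝ} (hdp : Tendsto (fun k => ‖u k - p‖) l (𝓝 dp))
    (hdq : Tendsto (fun k => ‖u k - q‖) l (𝓝 dq)) : p = q := by
  have hval : ∀ k, ⟪u k, p - q⟫ = (‖u k - q‖ ^ 2 - ‖u k - p‖ ^ 2 + ‖p‖ ^ 2 - ‖q‖ ^ 2) / 2 := by
    intro k
    rw [inner_sub_right, norm_sub_sq_real, norm_sub_sq_real]
    ring
  have hlim : Tendsto (fun k => ⟪u k, p - q⟫) l
      (𝓝 ((dq ^ 2 - dp ^ 2 + ‖p‖ ^ 2 - ‖q‖ ^ 2) / 2)) := by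
    simp_rw [hval]
    exact ((((hdq.pow 2).sub (hdp.pow 2)).add_const _).sub_const _).div_const 2
  have hpq := tendsto_nhds_unique (hp (p - q)) (hlim.mono_left hU)
  have hqp := tendsto_nhds_unique (hq (p - q)) (hlim.mono_left hV)
  rw [← sub_eq_zero, ← inner_self_eq_zero (𝕜 := ℝ), inner_sub_left, hpq, hqp, sub_self]

lemma TendstoWeakly.apply_le_zero {f : H → ℝ} {g : H → H}
    (hsub : ∀ y z, f y + ⟪g y, z - y⟫ ≤ f z) {l : Filter α} [l.NeBot] {u : α → H} {p : H}
    (hp : TendstoWeakly u l p) {b : α → ℝ} (hb : Tendsto b l (𝓝 0))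
    (hfb : ∀ k, f (u k) ≤ b k) : f p ≤ 0 := by
  have hlim : Tendsto (fun k => f p + ⟪g p, u k - p⟫) l (𝓝 (f p)) := by
    simpa [inner_sub_right, real_inner_comm] using
      ((hp (g p)).sub_const ⟪p, g p⟫).const_add (f p)
  exact le_of_tendsto_of_tendsto' hlim hb fun k => (hsub p (u k)).trans (hfb k)

/- Weak cluster points of `u` are exactly its weak limits along ultrafilters finer than `atTop`,
which is how `hclus` asks for them to lie in `C`. -/
theorem exists_tendstoWeakly_of_antitone_norm_sub [CompleteSpace H] {u : ℕ → H} {C : Set H}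
    (hC : C.Nonempty) (hfejer : ∀ z ∈ C, Antitone fun k => ‖u k - z‖)
    (hclus : ∀ U : Ultrafilter ℕ, (U : Filter ℕ) ≤ atTop → ∀ p, TendstoWeakly u U p → p ∈ C) :
    ∃ p ∈ C, TendstoWeakly u atTop p := by
  obtain ⟨z, hz⟩ := hC
  have hbdd : IsBounded (Set.range u) :=
    (isBounded_closedBall (x := z) (r := ‖u 0 - z‖)).subset <| by
    rintro _ ⟨k, rfl⟩
    rw [mem_closedBall, dist_eq_norm]
    exact hfejer z hz (Nat.zero_le k)
  have hdist : ∀ y ∈ C, Tendsto (fun k => ‖u k - y‖) atTop (𝓝 (⨅ k, ‖u k - y‖)) := fun y hy =>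
    tendsto_atTop_ciInf (hfejer y hy) ⟨0, by rintro _ ⟨k, rfl⟩; positivity⟩
  obtain ⟨p, hp⟩ := exists_tendstoWeakly_of_isBounded (Ultrafilter.of (atTop : Filter ℕ)) hbdd
  have hpC := hclus _ (Ultrafilter.of_le _) p hp
  refine ⟨p, hpC, fun w => (tendsto_iff_ultrafilter _ _ _).2 fun U hU => ?_⟩
  obtain ⟨q, hq⟩ := exists_tendstoWeakly_of_isBounded U hbdd
  obtain rfl : q = p := hq.eq_of_tendsto_norm_sub hU (Ultrafilter.of_le _) hp
    (hdist q (hclus U hU q hq)) (hdist p hpC)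
  exact hq w

end WeakConvergence

theorem doubleLayer_subgradient_weak_convergence_general
    {H : Type*} [NormedAddCommGroup H] [InnerProductSpace ℝ H] [CompleteSpace H]
    {m : ℕ}
    (f : Fin m → H → ℝ) (g : Fin m → H → H)
    (hsub : ∀ i, ∀ y z : H, f i y + ⟪g i y, z - y⟫ ≤ f i z)
    (hC : (⋂ i, {z : H | f i z ≤ 0}).Nonempty)
    (x : ℕ → H) (Ik Jk : ℕ → Finset (Fin m)) (α : ℕ → ℝ) (ω : ℕ → Fin m → ℝ)
    (hIkne : ∀ k, (Ik k).Nonempty) (hIJ : ∀ k, Ik k ⊆ Jk k)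
    (αminus αplus ωminus : ℝ)
    (hαminus : αminus ∈ Set.Ioc (0 : ℝ) 1) (hαplus : αplus ∈ Set.Ico (1 : ℝ) 2)
    (hωminus : ωminus ∈ Set.Ioc (0 : ℝ) 1)
    (hα : ∀ k, α k ∈ Set.Icc αminus αplus)
    (hω : ∀ k, ∀ i ∈ Ik k, ω k i ∈ Set.Icc ωminus 1)
    (hωsum : ∀ k, ∑ i ∈ Ik k, ω k i = 1)
    (hrec : ∀ k, x (k + 1) =
      x k + α k • ((∑ i ∈ Ik k, ω k i • subgradProj (f i) (g i) (x k)) - x k))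
    (s : ℕ)
    (hcover : ∀ k, ∀ i : Fin m, ∃ l < s, i ∈ Jk (k + l))
    (hiii : Tendsto (fun k => (Ik k).sup' (hIkne k) fun i =>
        ‖subgradProj (f i) (g i) (x k) - x k‖) atTop (nhds 0) →
      Tendsto (fun k => (Jk k).sup' ((hIkne k).mono (hIJ k)) fun i =>
        ‖subgradProj (f i) (g i) (x k) - x k‖) atTop (nhds 0))
    (hLip : ∀ i, ∀ S : Set H, IsBounded S → ∃ L : NNReal, LipschitzOnWith L (f i) S) :
    ∃ xinf ∈ ⋂ i, {z : H | f i z ≤ 0}, ∀ w : H,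
      Tendsto (fun k => ⟪x k, w⟫) atTop (nhds ⟪xinf, w⟫) := by
  obtain ⟨z, hz⟩ := hC
  have hcut : ∀ y ∈ ⋂ i, {z : H | f i z ≤ 0}, ∀ i v,
      ⟪v - y, subgradProj (f i) (g i) v - v⟫ ≤ -‖subgradProj (f i) (g i) v - v‖ ^ 2 :=
    fun y hy i => inner_sub_subgradProj_sub_le (hsub i) (Set.mem_iInter.1 hy i)
  have hx : IsRelaxedAverageIteration (fun i => subgradProj (f i) (g i)) Ik α ω
      αminus αplus ωminus x :=
    ⟨hαminus.1, hαplus.2, hα, hωminus.1, fun k i hi => (hω k i hi).1, hωsum, hrec⟩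
  have hresI := hx.tendsto_sup'_norm_sub hIkne (hcut z hz)
  have hball : ∀ k, closedBall (x k) 1 ⊆ closedBall z (‖x 0 - z‖ + 1) := fun k =>
    closedBall_subset_closedBall' <| by
      rw [dist_eq_norm]; linarith [hx.antitone_norm_sub (hcut z hz) (Nat.zero_le k)]
  refine exists_tendstoWeakly_of_antitone_norm_sub ⟨z, hz⟩
    (fun y hy => hx.antitone_norm_sub (hcut y hy)) fun U hU p hp => Set.mem_iInter.2 fun i => ?_
  obtain ⟨L, hL⟩ := hLip i _ isBounded_closedBall
  obtain ⟨b, hb, hfb⟩ := exists_tendsto_zero_apply_le_of_subgradProj_window (hsub i)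
    (Set.mem_iInter.1 hz i) hL hball (hx.tendsto_dist_succ hIkne hresI)
    (fun k => let ⟨j, hj⟩ := hIkne k; Finset.le_sup'_of_le
      (fun i => ‖subgradProj (f i) (g i) (x k) - x k‖) (hIJ k hj) (norm_nonneg _))
    (hiii hresI) fun k => let ⟨l, hl, hiJ⟩ := hcover k i
      ⟨l, hl, Finset.le_sup' (fun j => ‖subgradProj (f j) (g j) (x (k + l)) - x (k + l)‖) hiJ⟩
  exact hp.apply_le_zero (hsub i) (hb.mono_left hU) hfb

/-- Weak convergence of the double-layer subgradient projection
algorithm in a Hilbert space, for convex continuous functions that are Lipschitz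
continuous on bounded sets. -/
theorem doubleLayer_subgradient_weak_convergence
    {H : Type*} [NormedAddCommGroup H] [InnerProductSpace ℝ H] [CompleteSpace H]
    {m : ℕ} [NeZero m]
    (f : Fin m → H → ℝ) (g : Fin m → H → H)
    (hconv : ∀ i, ConvexOn ℝ Set.univ (f i)) (hcont : ∀ i, Continuous (f i))
    (hsub : ∀ i, ∀ y z : H, f i y + ⟪g i y, z - y⟫ ≤ f i z)
    (hC : (⋂ i, {z : H | f i z ≤ 0}).Nonempty)
    (x : ℕ → H) (Ik Jk : ℕ → Finset (Fin m)) (α : ℕ → ℝ) (ω : ℕ → Fin m → ℝ)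
    (hIkne : ∀ k, (Ik k).Nonempty) (hIJ : ∀ k, Ik k ⊆ Jk k)
    (αminus αplus ωminus : ℝ)
    (hαminus : αminus ∈ Set.Ioc (0 : ℝ) 1) (hαplus : αplus ∈ Set.Ico (1 : ℝ) 2)
    (hωminus : ωminus ∈ Set.Ioc (0 : ℝ) 1)
    (hα : ∀ k, α k ∈ Set.Icc αminus αplus)
    (hω : ∀ k, ∀ i ∈ Ik k, ω k i ∈ Set.Icc ωminus 1)
    (hωsum : ∀ k, ∑ i ∈ Ik k, ω k i = 1)
    (hrec : ∀ k, x (k + 1) =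
      x k + α k • ((∑ i ∈ Ik k, ω k i • subgradProj (f i) (g i) (x k)) - x k))
    (s : ℕ) (hs : 1 ≤ s)
    (hcover : ∀ k, ∀ i : Fin m, ∃ l < s, i ∈ Jk (k + l))
    (hiii : Tendsto (fun k => (Ik k).sup' (hIkne k) fun i =>
        ‖subgradProj (f i) (g i) (x k) - x k‖) atTop (nhds 0) →
      Tendsto (fun k => (Jk k).sup' ((hIkne k).mono (hIJ k)) fun i =>
        ‖subgradProj (f i) (g i) (x k) - x k‖) atTop (nhds 0))
    (hLip : ∀ i, ∀ S : Set H, IsBounded S → ∃ L : NNReal, LipschitzOnWith L (f i) S) :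
    ∃ xinf ∈ ⋂ i, {z : H | f i z ≤ 0}, ∀ w : H,
      Tendsto (fun k => ⟪x k, w⟫) atTop (nhds ⟪xinf, w⟫) :=
  doubleLayer_subgradient_weak_convergence_general f g hsub hC x Ik Jk α ω hIkne hIJ αminus αplus
    ωminus hαminus hαplus hωminus hα hω hωsum hrec s hcover hiii hLip
end

section
/- For each i ∈ I = {1,…,m}, let f_i : ℝⁿ → ℝ be convex and continuous with C := ⋂_{i∈I} S(f_i, 0) ≠ ∅, and let {x^k} be generated by the double-layer subgradient projection algorithm x^{k+1} := x^k + α_k(Σ_{i∈I_k} ω_i^k P_{f_i} x^k − x^k) under conditions (i) and (ii), and assume (iii): if lim_{k→∞} max_{i∈I_k} f_i⁺(x^k) = 0 then lim_{k→∞} max_{j∈J_k} f_j⁺(x^k) = 0. Then {x^k} converges in norm to some point x^∞ ∈ C. -/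
/-!
Each subgradient projection `P_i` is a cutter for `S(f_i, 0) ⊇ C`, so for every `z ∈ C`
`‖x^{k+1} - z‖² + α_k (2 - α_k) Σ_{i ∈ I_k} ω_i^k ‖x^k - P_i x^k‖² ≤ ‖x^k - z‖²`.
Hence `{x^k}` is Fejér monotone with respect to `C`, the weighted residuals are summable and the
steps `‖x^{k+1} - x^k‖` tend to zero. On the bounded orbit the subgradients are bounded, and
`f_i⁺(x) ≤ ‖g_i(x)‖ ‖x - P_i x‖` gives `max_{i ∈ I_k} f_i⁺(x^k) → 0`; condition (iii) upgrades
this to `J_k`. Every `i` lies in some `J_{k+l}` with `l < s`, and since the steps vanish,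
`x^{k+l}` has the same limit as `x^k` along any convergent subsequence: so every cluster point
lies in `C`. A Fejér monotone sequence in `ℝⁿ` with a cluster point in `C` converges to it.
-/

open Filter Metric Bornology RealInnerProductSpace

open scoped Topology

theorem norm_sum_smul_sq_le {F : Type*} [SeminormedAddCommGroup F] [NormedSpace ℝ F]
    {ι : Type*} {t : Finset ι} {ω : ι → ℝ} (hω0 : ∀ i ∈ t, 0 ≤ ω i)
    (hω1 : ∑ i ∈ t, ω i = 1) (v : ι → F) :
    ‖∑ i ∈ t, ω i • v i‖ ^ 2 ≤ ∑ i ∈ t, ω i * ‖v i‖ ^ 2 :=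
  ((convexOn_norm convex_univ).pow (fun _ _ => norm_nonneg _) 2).map_sum_le hω0 hω1
    (fun _ _ => Set.mem_univ _)

theorem sum_smul_sub_self_eq_neg {F : Type*} [AddCommGroup F] [Module ℝ F]
    {ι : Type*} {t : Finset ι} {ω : ι → ℝ} (hω1 : ∑ i ∈ t, ω i = 1) (v : ι → F) (x : F) :
    ∑ i ∈ t, ω i • v i - x = -∑ i ∈ t, ω i • (x - v i) := by
  simp only [smul_sub, Finset.sum_sub_distrib, ← Finset.sum_smul, hω1, one_smul, neg_sub]

section InnerProductSpace

variable {E : Type*} [NormedAddCommGroup E] [InnerProductSpace ℝ E]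

def IsSubgradientSelection (f : E → ℝ) (g : E → E) : Prop :=
  ∀ y z, f y + ⟪g y, z - y⟫ ≤ f z

/-- Equivalent to the usual cutter inequality `⟪z - T x, x - T x⟫ ≤ 0`. -/
def IsCutter (T : E → E) (C : Set E) : Prop :=
  ∀ x, ∀ z ∈ C, ‖x - T x‖ ^ 2 ≤ ⟪x - T x, x - z⟫

theorem IsCutter.mono {T : E → E} {C D : Set E} (hT : IsCutter T C) (hDC : D ⊆ C) :
    IsCutter T D :=
  fun x z hz => hT x z (hDC hz)

theorem sub_subgradProj_of_pos {f : E → ℝ} {g : E → E} {x : E} (hx : 0 < f x) :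
    x - subgradProj f g x = (f x / ‖g x‖ ^ 2) • g x := by
  simp [subgradProj, hx]

namespace IsSubgradientSelection

variable {f : E → ℝ} {g : E → E}

theorem ne_zero (hg : IsSubgradientSelection f g) {x z : E} (hz : f z ≤ 0) (hx : 0 < f x) :
    g x ≠ 0 := by
  intro h0
  have := hg x z
  rw [h0, inner_zero_left] at this
  linarith

theorem isCutter_subgradProj (hg : IsSubgradientSelection f g) :
    IsCutter (subgradProj f g) {z | f z ≤ 0} := by
  intro x z (hz : f z ≤ 0)
  by_cases hx : 0 < f x
  · have hgx : 0 < ‖g x‖ := norm_pos_iff.2 (hg.ne_zero hz hx)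
    have hfx : f x ≤ ⟪g x, x - z⟫ := by
      have := hg x z
      rw [← neg_sub, inner_neg_right] at this
      linarith
    rw [sub_subgradProj_of_pos hx, real_inner_smul_left, norm_smul, Real.norm_eq_abs,
      abs_of_pos (by positivity)]
    calc (f x / ‖g x‖ ^ 2 * ‖g x‖) ^ 2 = f x / ‖g x‖ ^ 2 * f x := by field_simp
      _ ≤ f x / ‖g x‖ ^ 2 * ⟪g x, x - z⟫ := by gcongr
  · simp [subgradProj, hx]

theorem posPart_le_mul_norm_sub_subgradProj (hg : IsSubgradientSelection f g) {z : E}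
    (hz : f z ≤ 0) (x : E) : max 0 (f x) ≤ ‖g x‖ * ‖x - subgradProj f g x‖ := by
  by_cases hx : 0 < f x
  · have hgx : 0 < ‖g x‖ := norm_pos_iff.2 (hg.ne_zero hz hx)
    rw [max_eq_right hx.le, sub_subgradProj_of_pos hx, norm_smul, Real.norm_eq_abs,
      abs_of_pos (by positivity)]
    exact le_of_eq (by field_simp)
  · rw [max_eq_left (not_lt.1 hx)]
    positivity

theorem norm_le_sub (hg : IsSubgradientSelection f g) (x : E) :
    ‖g x‖ ≤ f (x + ‖g x‖⁻¹ • g x) - f x := by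
  have := hg x (x + ‖g x‖⁻¹ • g x)
  rw [add_sub_cancel_left, real_inner_smul_right, real_inner_self_eq_norm_sq] at this
  rcases eq_or_ne ‖g x‖ 0 with h | h
  · simp [h]
  · rw [pow_two, inv_mul_cancel_left₀ h] at this
    linarith

theorem exists_norm_le_of_isBounded [ProperSpace E] (hg : IsSubgradientSelection f g)
    (hf : Continuous f) {K : Set E} (hK : IsBounded K) : ∃ G, ∀ x ∈ K, ‖g x‖ ≤ G := by
  obtain ⟨r, hr⟩ := hK.subset_closedBall 0
  obtain ⟨M, hM⟩ := (isCompact_closedBall (0 : E) (r + 1)).exists_bound_of_continuousOn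
    hf.continuousOn
  refine ⟨2 * M, fun x hx => ?_⟩
  have hxr : ‖x‖ ≤ r := mem_closedBall_zero_iff.1 (hr hx)
  have hunit : ‖‖g x‖⁻¹ • g x‖ ≤ 1 := by
    rcases eq_or_ne (g x) 0 with h | h
    · simp [h]
    · exact (norm_smul_inv_norm h).le
  have hy : x + ‖g x‖⁻¹ • g x ∈ closedBall (0 : E) (r + 1) :=
    mem_closedBall_zero_iff.2 ((norm_add_le _ _).trans (add_le_add hxr hunit))
  have h1 := hM _ hy
  have h2 := hM x (closedBall_subset_closedBall (by linarith) (hr hx))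
  rw [Real.norm_eq_abs, abs_le] at h1 h2
  linarith [hg.norm_le_sub x]

end IsSubgradientSelection

theorem norm_relaxedAverage_sub_sq_add_le {ι : Type*} {t : Finset ι} {ω : ι → ℝ}
    (hω0 : ∀ i ∈ t, 0 ≤ ω i) (hω1 : ∑ i ∈ t, ω i = 1) {T : ι → E → E} {C : Set E}
    (hT : ∀ i, IsCutter (T i) C) {α : ℝ} (hα : 0 ≤ α) (x : E) {z : E} (hz : z ∈ C) :
    ‖x + α • (∑ i ∈ t, ω i • T i x - x) - z‖ ^ 2 +
        α * (2 - α) * ∑ i ∈ t, ω i * ‖x - T i x‖ ^ 2 ≤ ‖x - z‖ ^ 2 := by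
  rw [sum_smul_sub_self_eq_neg hω1]
  set d := ∑ i ∈ t, ω i • (x - T i x)
  set S := ∑ i ∈ t, ω i * ‖x - T i x‖ ^ 2
  have hdS : ‖d‖ ^ 2 ≤ S := norm_sum_smul_sq_le hω0 hω1 _
  have hSd : S ≤ ⟪d, x - z⟫ := by
    rw [sum_inner]
    exact Finset.sum_le_sum fun i hi => by
      rw [real_inner_smul_left]
      exact mul_le_mul_of_nonneg_left (hT i x z hz) (hω0 i hi)
  rw [smul_neg, ← sub_eq_add_neg, sub_right_comm, norm_sub_sq_real, real_inner_smul_right,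
    norm_smul, Real.norm_of_nonneg hα, mul_pow, real_inner_comm]
  nlinarith [mul_le_mul_of_nonneg_left hSd hα, mul_le_mul_of_nonneg_left hdS (sq_nonneg α)]

end InnerProductSpace

section MetricSpace

variable {X : Type*} [PseudoMetricSpace X] {x : ℕ → X}

theorem isBounded_range_of_antitone_dist {z : X} (hx : Antitone fun k => dist (x k) z) :
    IsBounded (Set.range x) :=
  isBounded_closedBall.subset <| Set.range_subset_iff.2 fun k => hx (Nat.zero_le k)

theorem exists_tendsto_of_antitone_dist [ProperSpace X] {C : Set X} (hC : C.Nonempty)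
    (hx : ∀ z ∈ C, Antitone fun k => dist (x k) z)
    (hcluster : ∀ p (φ : ℕ → ℕ), StrictMono φ → Tendsto (x ∘ φ) atTop (𝓝 p) → p ∈ C) :
    ∃ p ∈ C, Tendsto x atTop (𝓝 p) := by
  obtain ⟨z, hz⟩ := hC
  obtain ⟨p, -, φ, hφ, hp⟩ := (isBounded_range_of_antitone_dist (hx z hz)).isCompact_closure
    |>.tendsto_subseq fun k => subset_closure (Set.mem_range_self k)
  have hpC := hcluster p φ hφ hp
  refine ⟨p, hpC, tendsto_iff_dist_tendsto_zero.2 ?_⟩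
  exact (tendsto_iff_tendsto_subseq_of_antitone (hx p hpC) hφ.tendsto_atTop).2
    (tendsto_iff_dist_tendsto_zero.1 hp)

theorem tendsto_dist_add_of_tendsto_dist_succ
    (hstep : Tendsto (fun k => dist (x k) (x (k + 1))) atTop (𝓝 0)) {φ l : ℕ → ℕ} {s : ℕ}
    (hφ : Tendsto φ atTop atTop) (hl : ∀ j, l j < s) :
    Tendsto (fun j => dist (x (φ j)) (x (φ j + l j))) atTop (𝓝 0) := by
  have hsum : Tendsto (fun j => ∑ t ∈ Finset.range s, dist (x (φ j + t)) (x (φ j + t + 1)))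
      atTop (𝓝 0) := by
    simpa using tendsto_finsetSum (Finset.range s) fun t _ =>
      hstep.comp (tendsto_atTop_mono (fun j => Nat.le_add_right (φ j) t) hφ)
  refine squeeze_zero (fun _ => dist_nonneg) (fun j => ?_) hsum
  exact (dist_le_range_sum_dist (fun t => x (φ j + t)) (l j)).trans
    (Finset.sum_le_sum_of_subset_of_nonneg (Finset.range_subset_range.2 (hl j).le)
      fun _ _ _ => dist_nonneg)

theorem le_zero_of_tendsto_sup'_of_cover {ι : Type*} {F : ι → X → ℝ} {J : ℕ → Finset ι}
    (hJ : ∀ k, (J k).Nonempty)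
    (hmax : Tendsto (fun k => (J k).sup' (hJ k) fun i => max 0 (F i (x k))) atTop (𝓝 0))
    (hstep : Tendsto (fun k => dist (x k) (x (k + 1))) atTop (𝓝 0)) {i : ι} {s : ℕ}
    (hcover : ∀ k, ∃ l < s, i ∈ J (k + l)) (hF : Continuous (F i)) {φ : ℕ → ℕ} {p : X}
    (hφ : Tendsto φ atTop atTop) (hp : Tendsto (x ∘ φ) atTop (𝓝 p)) : F i p ≤ 0 := by
  choose l hls hlJ using fun j => hcover (φ j)
  have hψ : Tendsto (fun j => φ j + l j) atTop atTop :=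
    tendsto_atTop_mono (fun j => Nat.le_add_right _ _) hφ
  have hxψ : Tendsto (fun j => x (φ j + l j)) atTop (𝓝 p) :=
    hp.congr_dist (tendsto_dist_add_of_tendsto_dist_succ hstep hφ hls)
  refine le_of_tendsto_of_tendsto' ((hF.tendsto p).comp hxψ) (hmax.comp hψ) fun j => ?_
  exact (le_max_right _ _).trans
    (Finset.le_sup' (fun i => max 0 (F i (x (φ j + l j)))) (hlJ j))

end MetricSpace

section RelaxedAverage

variable {E : Type*} [NormedAddCommGroup E] [InnerProductSpace ℝ E] {ι : Type*}

structure IsRelaxedAverageSeq (T : ι → E → E) (I : ℕ → Finset ι) (ω : ℕ → ι → ℝ)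
    (α : ℕ → ℝ) (x : ℕ → E) : Prop where
  weight_nonneg : ∀ k, ∀ i ∈ I k, 0 ≤ ω k i
  sum_weight : ∀ k, ∑ i ∈ I k, ω k i = 1
  relax_mem : ∀ k, α k ∈ Set.Icc 0 2
  succ_eq : ∀ k, x (k + 1) = x k + α k • (∑ i ∈ I k, ω k i • T i (x k) - x k)

def weightedResidual (T : ι → E → E) (I : ℕ → Finset ι) (ω : ℕ → ι → ℝ) (x : ℕ → E)
    (k : ℕ) : ℝ :=
  ∑ i ∈ I k, ω k i * ‖x k - T i (x k)‖ ^ 2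

namespace IsRelaxedAverageSeq

variable {T : ι → E → E} {I : ℕ → Finset ι} {ω : ℕ → ι → ℝ} {α : ℕ → ℝ} {x : ℕ → E}
  {C : Set E} {z : E}

theorem weightedResidual_nonneg (hx : IsRelaxedAverageSeq T I ω α x) (k : ℕ) :
    0 ≤ weightedResidual T I ω x k :=
  Finset.sum_nonneg fun i hi => mul_nonneg (hx.weight_nonneg k i hi) (sq_nonneg _)

theorem norm_succ_sub_sq_add_le (hx : IsRelaxedAverageSeq T I ω α x)
    (hT : ∀ i, IsCutter (T i) C) (hz : z ∈ C) (k : ℕ) :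
    ‖x (k + 1) - z‖ ^ 2 + α k * (2 - α k) * weightedResidual T I ω x k ≤ ‖x k - z‖ ^ 2 := by
  rw [hx.succ_eq k]
  exact norm_relaxedAverage_sub_sq_add_le (hx.weight_nonneg k) (hx.sum_weight k) hT
    (hx.relax_mem k).1 (x k) hz

theorem antitone_dist (hx : IsRelaxedAverageSeq T I ω α x) (hT : ∀ i, IsCutter (T i) C)
    (hz : z ∈ C) : Antitone fun k => dist (x k) z := by
  refine antitone_nat_of_succ_le fun k => ?_
  have hdecay := hx.norm_succ_sub_sq_add_le hT hz k
  have hα := hx.relax_mem k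
  have : 0 ≤ α k * (2 - α k) * weightedResidual T I ω x k :=
    mul_nonneg (mul_nonneg hα.1 (by linarith [hα.2])) (hx.weightedResidual_nonneg k)
  simp only [dist_eq_norm]
  exact pow_le_pow_iff_left₀ (norm_nonneg _) (norm_nonneg _) two_ne_zero |>.1 (by linarith)

theorem summable_weightedResidual (hx : IsRelaxedAverageSeq T I ω α x)
    (hT : ∀ i, IsCutter (T i) C) (hz : z ∈ C) {a b : ℝ} (ha : 0 < a) (hb : b < 2)
    (hα : ∀ k, α k ∈ Set.Icc a b) : Summable (weightedResidual T I ω x) := by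
  have hc : 0 < a * (2 - b) := mul_pos ha (by linarith)
  have hle : ∀ k, a * (2 - b) * weightedResidual T I ω x k ≤
      ‖x k - z‖ ^ 2 - ‖x (k + 1) - z‖ ^ 2 := by
    intro k
    obtain ⟨hak, hkb⟩ := hα k
    have : a * (2 - b) ≤ α k * (2 - α k) :=
      mul_le_mul hak (by linarith) (by linarith) (ha.le.trans hak)
    nlinarith [hx.norm_succ_sub_sq_add_le hT hz k, hx.weightedResidual_nonneg k]
  refine (summable_mul_left_iff hc.ne').1 <| summable_of_sum_range_le (c := ‖x 0 - z‖ ^ 2)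
    (fun k => mul_nonneg hc.le (hx.weightedResidual_nonneg k)) fun N => ?_
  calc ∑ k ∈ Finset.range N, a * (2 - b) * weightedResidual T I ω x k
      ≤ ∑ k ∈ Finset.range N, (‖x k - z‖ ^ 2 - ‖x (k + 1) - z‖ ^ 2) :=
        Finset.sum_le_sum fun k _ => hle k
    _ = ‖x 0 - z‖ ^ 2 - ‖x N - z‖ ^ 2 := Finset.sum_range_sub' (fun k => ‖x k - z‖ ^ 2) N
    _ ≤ ‖x 0 - z‖ ^ 2 := sub_le_self _ (sq_nonneg _)

theorem dist_succ_le (hx : IsRelaxedAverageSeq T I ω α x) (k : ℕ) :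
    dist (x k) (x (k + 1)) ≤ 2 * √(weightedResidual T I ω x k) := by
  rw [dist_comm, hx.succ_eq k, dist_eq_norm, add_sub_cancel_left, norm_smul,
    Real.norm_of_nonneg (hx.relax_mem k).1, sum_smul_sub_self_eq_neg (hx.sum_weight k),
    norm_neg]
  exact mul_le_mul (hx.relax_mem k).2 (Real.le_sqrt_of_sq_le
    (norm_sum_smul_sq_le (hx.weight_nonneg k) (hx.sum_weight k) _)) (norm_nonneg _) zero_le_two

theorem tendsto_dist_succ (hx : IsRelaxedAverageSeq T I ω α x)
    (hS : Tendsto (weightedResidual T I ω x) atTop (𝓝 0)) :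
    Tendsto (fun k => dist (x k) (x (k + 1))) atTop (𝓝 0) :=
  squeeze_zero (fun _ => dist_nonneg) hx.dist_succ_le (by simpa using hS.sqrt.const_mul 2)

end IsRelaxedAverageSeq

end RelaxedAverage

theorem tendsto_sup'_posPart_of_tendsto_weightedResidual {E : Type*} [NormedAddCommGroup E]
    [InnerProductSpace ℝ E] [ProperSpace E] {ι : Type*} [Finite ι] {f : ι → E → ℝ}
    {g : ι → E → E} (hg : ∀ i, IsSubgradientSelection (f i) (g i)) (hf : ∀ i, Continuous (f i))
    {z : E} (hz : ∀ i, f i z ≤ 0) {x : ℕ → E} (hxb : IsBounded (Set.range x))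
    {I : ℕ → Finset ι} (hI : ∀ k, (I k).Nonempty) {ω : ℕ → ι → ℝ} {c : ℝ} (hc : 0 < c)
    (hω : ∀ k, ∀ i ∈ I k, c ≤ ω k i)
    (hS : Tendsto (weightedResidual (fun i => subgradProj (f i) (g i)) I ω x) atTop (𝓝 0)) :
    Tendsto (fun k => (I k).sup' (hI k) fun i => max 0 (f i (x k))) atTop (𝓝 0) := by
  set S := weightedResidual (fun i => subgradProj (f i) (g i)) I ω x
  set u : ℕ → ι → E := fun k i => x k - subgradProj (f i) (g i) (x k)
  choose G hG using fun i => (hg i).exists_norm_le_of_isBounded (hf i) hxb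
  obtain ⟨M, hM⟩ := (Set.finite_range G).bddAbove
  have hgM : ∀ i k, ‖g i (x k)‖ ≤ M := fun i k =>
    (hG i _ (Set.mem_range_self k)).trans (hM (Set.mem_range_self i))
  have hres : ∀ k, ∀ i ∈ I k, ‖u k i‖ ≤ √(S k / c) := by
    intro k i hi
    refine Real.le_sqrt_of_sq_le ((le_div_iff₀' hc).2 ?_)
    calc c * ‖u k i‖ ^ 2 ≤ ω k i * ‖u k i‖ ^ 2 := by gcongr; exact hω k i hi
      _ ≤ S k := Finset.single_le_sum (f := fun j => ω k j * ‖u k j‖ ^ 2)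
          (fun j hj => mul_nonneg (hc.le.trans (hω k j hj)) (sq_nonneg _)) hi
  refine squeeze_zero (fun k => ?_) (fun k => Finset.sup'_le _ _ fun i hi => ?_)
    (by simpa using (hS.div_const c).sqrt.const_mul M)
  · obtain ⟨i, hi⟩ := hI k
    exact (le_max_left _ _).trans (Finset.le_sup' (fun i => max 0 (f i (x k))) hi)
  · exact ((hg i).posPart_le_mul_norm_sub_subgradProj (hz i) (x k)).trans
      (mul_le_mul (hgM i k) (hres k i hi) (norm_nonneg _) ((norm_nonneg _).trans (hgM i k)))

theorem doubleLayer_subgradient_convergence_Rn_general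
    {n : ℕ} {m : ℕ}
    (f : Fin m → EuclideanSpace ℝ (Fin n) → ℝ)
    (g : Fin m → EuclideanSpace ℝ (Fin n) → EuclideanSpace ℝ (Fin n))
    (hcont : ∀ i, Continuous (f i))
    (hsub : ∀ i, ∀ y z : EuclideanSpace ℝ (Fin n), f i y + ⟪g i y, z - y⟫ ≤ f i z)
    (hC : (⋂ i, {z : EuclideanSpace ℝ (Fin n) | f i z ≤ 0}).Nonempty)
    (x : ℕ → EuclideanSpace ℝ (Fin n)) (Ik Jk : ℕ → Finset (Fin m))
    (α : ℕ → ℝ) (ω : ℕ → Fin m → ℝ)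
    (hIkne : ∀ k, (Ik k).Nonempty) (hIJ : ∀ k, Ik k ⊆ Jk k)
    (αminus αplus ωminus : ℝ)
    (hαminus : αminus ∈ Set.Ioc (0 : ℝ) 1) (hαplus : αplus ∈ Set.Ico (1 : ℝ) 2)
    (hωminus : ωminus ∈ Set.Ioc (0 : ℝ) 1)
    (hα : ∀ k, α k ∈ Set.Icc αminus αplus)
    (hω : ∀ k, ∀ i ∈ Ik k, ω k i ∈ Set.Icc ωminus 1)
    (hωsum : ∀ k, ∑ i ∈ Ik k, ω k i = 1)
    (hrec : ∀ k, x (k + 1) =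
      x k + α k • ((∑ i ∈ Ik k, ω k i • subgradProj (f i) (g i) (x k)) - x k))
    (s : ℕ)
    (hcover : ∀ k, ∀ i : Fin m, ∃ l < s, i ∈ Jk (k + l))
    (hiii : Tendsto (fun k => (Ik k).sup' (hIkne k) fun i => max 0 (f i (x k)))
        atTop (nhds 0) →
      Tendsto (fun k => (Jk k).sup' ((hIkne k).mono (hIJ k)) fun i =>
        max 0 (f i (x k))) atTop (nhds 0)) :
    ∃ xinf ∈ ⋂ i, {z : EuclideanSpace ℝ (Fin n) | f i z ≤ 0},
      Tendsto x atTop (nhds xinf) := by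
  have hT : ∀ i, IsCutter (subgradProj (f i) (g i)) (⋂ j, {z | f j z ≤ 0}) := fun i =>
    (IsSubgradientSelection.isCutter_subgradProj (hsub i)).mono (Set.iInter_subset _ i)
  have hx : IsRelaxedAverageSeq (fun i => subgradProj (f i) (g i)) Ik ω α x :=
    ⟨fun k i hi => hωminus.1.le.trans (hω k i hi).1, hωsum,
      fun k => ⟨hαminus.1.le.trans (hα k).1, (hα k).2.trans hαplus.2.le⟩, hrec⟩
  obtain ⟨z, hz⟩ := hC
  have hS := (hx.summable_weightedResidual hT hz hαminus.1 hαplus.2 hα).tendsto_atTop_zero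
  have hbdd := isBounded_range_of_antitone_dist (hx.antitone_dist hT hz)
  have hJmax := hiii <| tendsto_sup'_posPart_of_tendsto_weightedResidual hsub hcont
    (Set.mem_iInter.1 hz ·) hbdd hIkne hωminus.1 (fun k i hi => (hω k i hi).1) hS
  refine exists_tendsto_of_antitone_dist ⟨z, hz⟩ (fun p hp => hx.antitone_dist hT hp)
    fun p φ hφ hp => Set.mem_iInter.2 fun i => ?_
  exact le_zero_of_tendsto_sup'_of_cover _ hJmax (hx.tendsto_dist_succ hS) (hcover · i)
    (hcont i) hφ.tendsto_atTop hp

/-- Norm convergence of the double-layer subgradient projection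
algorithm in ℝⁿ. -/
theorem doubleLayer_subgradient_convergence_Rn
    {n : ℕ} {m : ℕ} [NeZero m]
    (f : Fin m → EuclideanSpace ℝ (Fin n) → ℝ)
    (g : Fin m → EuclideanSpace ℝ (Fin n) → EuclideanSpace ℝ (Fin n))
    (hconv : ∀ i, ConvexOn ℝ Set.univ (f i)) (hcont : ∀ i, Continuous (f i))
    (hsub : ∀ i, ∀ y z : EuclideanSpace ℝ (Fin n), f i y + ⟪g i y, z - y⟫ ≤ f i z)
    (hC : (⋂ i, {z : EuclideanSpace ℝ (Fin n) | f i z ≤ 0}).Nonempty)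
    (x : ℕ → EuclideanSpace ℝ (Fin n)) (Ik Jk : ℕ → Finset (Fin m))
    (α : ℕ → ℝ) (ω : ℕ → Fin m → ℝ)
    (hIkne : ∀ k, (Ik k).Nonempty) (hIJ : ∀ k, Ik k ⊆ Jk k)
    (αminus αplus ωminus : ℝ)
    (hαminus : αminus ∈ Set.Ioc (0 : ℝ) 1) (hαplus : αplus ∈ Set.Ico (1 : ℝ) 2)
    (hωminus : ωminus ∈ Set.Ioc (0 : ℝ) 1)
    (hα : ∀ k, α k ∈ Set.Icc αminus αplus)
    (hω : ∀ k, ∀ i ∈ Ik k, ω k i ∈ Set.Icc ωminus 1)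
    (hωsum : ∀ k, ∑ i ∈ Ik k, ω k i = 1)
    (hrec : ∀ k, x (k + 1) =
      x k + α k • ((∑ i ∈ Ik k, ω k i • subgradProj (f i) (g i) (x k)) - x k))
    (s : ℕ) (hs : 1 ≤ s)
    (hcover : ∀ k, ∀ i : Fin m, ∃ l < s, i ∈ Jk (k + l))
    (hiii : Tendsto (fun k => (Ik k).sup' (hIkne k) fun i => max 0 (f i (x k)))
        atTop (nhds 0) →
      Tendsto (fun k => (Jk k).sup' ((hIkne k).mono (hIJ k)) fun i =>
        max 0 (f i (x k))) atTop (nhds 0)) :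
    ∃ xinf ∈ ⋂ i, {z : EuclideanSpace ℝ (Fin n) | f i z ≤ 0},
      Tendsto x atTop (nhds xinf) :=
  doubleLayer_subgradient_convergence_Rn_general f g hcont hsub hC x Ik Jk α ω hIkne hIJ αminus
    αplus ωminus hαminus hαplus hωminus hα hω hωsum hrec s hcover hiii
end
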